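/- arXiv:2403.15967 — 7 statements merged into one kernel-verified Lean document; each statement's English description precedes it below -/
import Mathlib

section
/- Let a₀ be a positive even integer. The set of pairs (a₁, a₂) ∈ ℤ² satisfying (i) 24 ∣ a₀ + 2a₁ + 2a₂, (ii) 5 ∣ a₁ + 4a₂, (iii) a₀ + 2a₁ + 2a₂ ≥ 0, (iv) 25a₀ + 2a₁ − 22a₂ ≥ 0, and (v) 25a₀ − 22a₁ + 2a₂ ≥ 0 is exactly { (−(3/2)a₀ + 11b + 5t, a₀ + b − 5t) : b, t ∈ ℤ, 0 ≤ b ≤ ⌊a₀/4⌋, 0 ≤ t ≤ (a₀ − 4b)/2 }. -/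
/-- Parameterization of the level 5 polytope: the set of integer pairs `(a₁, a₂)`
satisfying the modularity constraints equals the parameterized set. -/
theorem level_five_polytope_param (a₀ : ℤ) (h0 : 0 < a₀) (he : Even a₀) :
    {x : ℤ × ℤ | 24 ∣ a₀ + 2 * x.1 + 2 * x.2 ∧ 5 ∣ x.1 + 4 * x.2 ∧
        0 ≤ a₀ + 2 * x.1 + 2 * x.2 ∧ 0 ≤ 25 * a₀ + 2 * x.1 - 22 * x.2 ∧
        0 ≤ 25 * a₀ - 22 * x.1 + 2 * x.2} =
      {x : ℤ × ℤ | ∃ b t : ℤ, 0 ≤ b ∧ b ≤ a₀ / 4 ∧ 0 ≤ t ∧ t ≤ (a₀ - 4 * b) / 2 ∧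
        x.1 = -(3 * a₀ / 2) + 11 * b + 5 * t ∧ x.2 = a₀ + b - 5 * t} := by
  obtain ⟨c, hc⟩ := he
  ext ⟨x1, x2⟩
  simp only [Set.mem_setOf_eq]
  constructor
  · rintro ⟨h1, h2, h3, h4, h5⟩
    exact ⟨(a₀ + 2 * x1 + 2 * x2) / 24, (25 * a₀ + 2 * x1 - 22 * x2) / 120,
      by omega, by omega, by omega, by omega, by omega, by omega⟩
  · rintro ⟨b, t, hb0, hb1, ht0, ht1, hx1, hx2⟩
    refine ⟨?_, ?_, ?_, ?_, ?_⟩ <;> omega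
end

section
/- Let a₀ be a positive even integer. The number of pairs (a₁, a₂) ∈ ℤ² satisfying 24 ∣ a₀ + 2a₁ + 2a₂, 5 ∣ a₁ + 4a₂, a₀ + 2a₁ + 2a₂ ≥ 0, 25a₀ + 2a₁ − 22a₂ ≥ 0, and 25a₀ − 22a₁ + 2a₂ ≥ 0 equals ⌊(a₀+4)²/16⌋. -/
private def lfpG (n : ℕ) : Finset (ℕ × ℕ) :=
  (Finset.range (n+1)).biUnion (fun k => (Finset.Icc k (n - k)).image (fun j => (k, j)))

private lemma lfpG_mem {n : ℕ} {p : ℕ × ℕ} :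
    p ∈ lfpG n ↔ p.1 ≤ p.2 ∧ p.1 + p.2 ≤ n := by
  simp only [lfpG, Finset.mem_biUnion, Finset.mem_range, Finset.mem_image, Finset.mem_Icc]
  constructor
  · rintro ⟨k, hk, j, ⟨h1, h2⟩, rfl⟩
    omega
  · rintro ⟨h1, h2⟩
    exact ⟨p.1, by omega, p.2, ⟨by omega, by omega⟩, rfl⟩

private lemma lfp_sum (n : ℕ) :
    (∑ k ∈ Finset.range (n+1), (n + 1 - 2*k)) = (n+2)^2/4 := by
  induction n using Nat.strong_induction_on with
  | _ n ih =>
    match n with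
    | 0 => decide
    | 1 => decide
    | (n+2) =>
      rw [Finset.sum_range_succ']
      have h1 : ∑ k ∈ Finset.range (n+2), (n + 2 + 1 - 2*(k+1))
          = ∑ k ∈ Finset.range (n+2), (n + 1 - 2*k) :=
        Finset.sum_congr rfl (fun k _ => by omega)
      rw [h1, Finset.sum_range_succ, ih n (by omega)]
      rcases Nat.even_or_odd n with ⟨t, rfl⟩ | ⟨t, rfl⟩
      · have e1 : (t+t+2)^2 = 4*((t+1)*(t+1)) := by ring
        have e2 : (t+t+2+2)^2 = 4*((t+1)*(t+1)) + 8*t + 12 := by ring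
        rw [e1, e2]
        generalize (t+1)*(t+1) = s
        omega
      · have e1 : (2*t+1+2)^2 = 4*(t*t) + 12*t + 9 := by ring
        have e2 : (2*t+1+2+2)^2 = 4*(t*t) + 20*t + 25 := by ring
        rw [e1, e2]
        generalize t*t = s
        omega

private lemma lfpG_card (n : ℕ) : (lfpG n).card = (n+2)^2/4 := by
  rw [lfpG, Finset.card_biUnion]
  · rw [← lfp_sum n]
    refine Finset.sum_congr rfl (fun k _ => ?_)
    have hinj : Function.Injective (fun j => (k, j) : ℕ → ℕ × ℕ) := by
      intro a b h; simpa using h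
    rw [Finset.card_image_of_injective _ hinj, Nat.card_Icc]
    omega
  · intro a _ b _ hab
    simp only [Finset.disjoint_left, Finset.mem_image, Finset.mem_Icc]
    rintro p ⟨j, _, rfl⟩ ⟨j', _, h⟩
    exact hab (congrArg Prod.fst h).symm

private def lfpF (n : ℕ) : ℕ × ℕ → ℤ × ℤ :=
  fun p => (6*(p.1:ℤ) + 2*(n:ℤ) - 5*(p.2:ℤ), 6*(p.1:ℤ) - 3*(n:ℤ) + 5*(p.2:ℤ))

private lemma lfpF_inj (n : ℕ) : Function.Injective (lfpF n) := by
  intro p q h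
  simp only [lfpF, Prod.mk.injEq] at h
  obtain ⟨h1, h2⟩ := h
  have : p.1 = q.1 ∧ p.2 = q.2 := by omega
  exact Prod.ext this.1 this.2

private lemma lfp_final (n : ℕ) : (((n+2)^2/4 : ℕ) : ℤ) = (2*(n:ℤ)+4)^2/16 := by
  rw [Int.natCast_div]
  push_cast
  rw [show (2*(n:ℤ)+4)^2 = 4*((n:ℤ)+2)^2 from by ring, show (16:ℤ) = 4*4 from by norm_num,
    Int.mul_ediv_mul_of_pos _ _ (by norm_num)]

/-- The number of lattice points of the level 5 polytope is `⌊(a₀+4)²/16⌋`. -/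
theorem level_five_polytope_count (a₀ : ℤ) (h0 : 0 < a₀) (he : Even a₀) :
    (Set.ncard {x : ℤ × ℤ | 24 ∣ a₀ + 2 * x.1 + 2 * x.2 ∧ 5 ∣ x.1 + 4 * x.2 ∧
        0 ≤ a₀ + 2 * x.1 + 2 * x.2 ∧ 0 ≤ 25 * a₀ + 2 * x.1 - 22 * x.2 ∧
        0 ≤ 25 * a₀ - 22 * x.1 + 2 * x.2} : ℤ) = (a₀ + 4) ^ 2 / 16 := by
  obtain ⟨r, hr⟩ := he
  set n : ℕ := r.toNat with hn'
  have hn : a₀ = 2 * (n : ℤ) := by simp only [hn']; omega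
  have hset : {x : ℤ × ℤ | 24 ∣ a₀ + 2 * x.1 + 2 * x.2 ∧ 5 ∣ x.1 + 4 * x.2 ∧
        0 ≤ a₀ + 2 * x.1 + 2 * x.2 ∧ 0 ≤ 25 * a₀ + 2 * x.1 - 22 * x.2 ∧
        0 ≤ 25 * a₀ - 22 * x.1 + 2 * x.2} = ↑((lfpG n).image (lfpF n)) := by
    ext x
    simp only [Set.mem_setOf_eq, Finset.coe_image, Set.mem_image, Finset.mem_coe]
    constructor
    · rintro ⟨h24, h5, hp1, hp2, hp3⟩
      obtain ⟨k, hk⟩ := h24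
      have h5' : (5:ℤ) ∣ 6*k + 2*(n:ℤ) - x.1 := by omega
      obtain ⟨j, hj⟩ := h5'
      refine ⟨(k.toNat, j.toNat), lfpG_mem.mpr ⟨by omega, by omega⟩, ?_⟩
      simp only [lfpF, Prod.mk.injEq]
      refine Prod.ext ?_ ?_ <;> simp only [lfpF] <;> omega
    · rintro ⟨p, hp, rfl⟩
      have hm := lfpG_mem.mp hp
      simp only [lfpF]
      refine ⟨?_, ?_, ?_, ?_, ?_⟩ <;> omega
  rw [hset, Set.ncard_coe_finset, Finset.card_image_of_injective _ (lfpF_inj n),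
    lfpG_card, lfp_final, hn]
end

section
/- Let p(n) denote the number of partitions of n. Then for all n ≥ 0, p(5n + 4) ≡ 0 (mod 5). -/
/-!
Modulo 5 we have `∏ (1 - qⁿ)⁵ = ∏ (1 - q⁵ⁿ)`, hence
`∑ p(n) qⁿ = ∏ (1 - qⁿ)⁻¹ = (∏ (1 - qⁿ)³)³ · ∏ (1 - q⁵ⁿ)⁻²`.
By Jacobi's identity `∏ (1 - qⁿ)³ = ∑ (-1)ʲ (2j + 1) q^(j(j+1)/2)`, and since
`8 · j(j+1)/2 + 1 = (2j + 1)²`, a term whose coefficient `2j + 1` is prime to 5 has exponent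
`≡ 0` or `1 (mod 5)`. So the cube only involves exponents `≢ 4 (mod 5)`, and multiplying by a
series in `q⁵` does not change that.

Jacobi's identity is proved modulo `qᵐ` from the finite triple product
`∏_{i<m} (1 + q^(i+1) z)(qⁱ + z)`: its `z`-derivative at `z = -1` is `±(q;q)ₘ (q;q)ₘ₋₁`, and by the
q-binomial theorem its coefficients of `z^(m+j)` and `z^(m-1-j)` are both congruent to
`q^(j(j+1)/2) / (q;q)_{2m}` modulo `q^m`, so pairing them produces the term `(-1)ʲ (2j + 1)`.
-/

open Finset PowerSeries
open scoped Pointwise PowerSeries.WithPiTopology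

namespace Ramanujan

section CommRing

variable (R : Type*) [CommRing R]

noncomputable def qPochhammer (m : ℕ) : R⟦X⟧ := ∏ i ∈ range m, (1 - X ^ (i + 1))

noncomputable def qBinomialProd (m : ℕ) : Polynomial R⟦X⟧ :=
  ∏ i ∈ range m, (1 + Polynomial.C (X ^ (i + 1)) * Polynomial.X)

noncomputable def finiteTripleProd (m : ℕ) : Polynomial R⟦X⟧ :=
  qBinomialProd R m * ∏ i ∈ range m, (Polynomial.C (X ^ i) + Polynomial.X)

noncomputable def jacobiSum (n : ℕ) : R⟦X⟧ :=
  ∑ j ∈ range n, C ((-1) ^ j * (2 * j + 1) : R) * X ^ (j + 1).choose 2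

variable {R}

theorem qPochhammer_zero : qPochhammer R 0 = 1 := prod_range_zero _

theorem qPochhammer_succ (m : ℕ) :
    qPochhammer R (m + 1) = qPochhammer R m * (1 - X ^ (m + 1)) :=
  prod_range_succ _ _

theorem isUnit_qPochhammer (m : ℕ) : IsUnit (qPochhammer R m) := by
  rw [isUnit_iff_constantCoeff, qPochhammer, map_prod]
  simp

theorem smodEq_X_pow_mono {f g : R⟦X⟧} {a b : ℕ} (hab : a ≤ b)
    (h : f ≡ g [SMOD Ideal.span {(X : R⟦X⟧) ^ b}]) : f ≡ g [SMOD Ideal.span {(X : R⟦X⟧) ^ a}] :=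
  h.mono (Ideal.span_singleton_le_span_singleton.mpr (pow_dvd_pow _ hab))

theorem coeff_eq_of_smodEq {f g : R⟦X⟧} {d i : ℕ}
    (h : f ≡ g [SMOD Ideal.span {(X : R⟦X⟧) ^ d}]) (hi : i < d) : coeff i f = coeff i g := by
  rw [SModEq.sub_mem, Ideal.mem_span_singleton, X_pow_dvd_iff] at h
  simpa [sub_eq_zero] using h i hi

theorem qPochhammer_smodEq_of_le {m N : ℕ} (h : m ≤ N) :
    qPochhammer R N ≡ qPochhammer R m [SMOD Ideal.span {(X : R⟦X⟧) ^ (m + 1)}] := by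
  obtain ⟨l, rfl⟩ := Nat.exists_eq_add_of_le h
  have hfactor (i : ℕ) : 1 - X ^ (m + i + 1) ≡ 1 [SMOD Ideal.span {(X : R⟦X⟧) ^ (m + 1)}] := by
    rw [SModEq.sub_mem, Ideal.mem_span_singleton, sub_sub_cancel_left, dvd_neg]
    exact pow_dvd_pow _ (by omega)
  have htail : ∏ i ∈ range l, (1 - X ^ (m + i + 1)) ≡ 1
      [SMOD Ideal.span {(X : R⟦X⟧) ^ (m + 1)}] := by
    simpa using SModEq.prod (s := range l) (y := fun _ ↦ 1) fun i _ ↦ hfactor i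
  simpa [qPochhammer, prod_range_add] using (SModEq.refl (qPochhammer R m)).mul htail

theorem smodEq_X_pow_of_mul_eq {A B y : R⟦X⟧} {e r : ℕ} (hA : IsUnit A) (h : A * y = X ^ e * B)
    (hAB : A ≡ B [SMOD Ideal.span {(X : R⟦X⟧) ^ r}]) :
    y ≡ X ^ e [SMOD Ideal.span {(X : R⟦X⟧) ^ (e + r)}] := by
  rw [SModEq.sub_mem, Ideal.mem_span_singleton] at hAB ⊢
  obtain ⟨c, hc⟩ := hAB
  obtain ⟨u, rfl⟩ := hA
  refine ⟨-(↑u⁻¹ * c), ?_⟩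
  calc y - X ^ e = ↑u⁻¹ * (↑u * y - X ^ e * ↑u) := by linear_combination (X ^ e - y) * u.inv_mul
    _ = X ^ (e + r) * -(↑u⁻¹ * c) := by rw [h, ← mul_sub, ← neg_sub, hc]; ring

theorem coeff_zero_qBinomialProd (m : ℕ) : (qBinomialProd R m).coeff 0 = 1 := by
  simp [qBinomialProd, Polynomial.coeff_zero_eq_eval_zero, Polynomial.eval_prod]

theorem coeff_qBinomialProd_succ (m k : ℕ) : (qBinomialProd R (m + 1)).coeff (k + 1) =
    (qBinomialProd R m).coeff (k + 1) + X ^ (m + 1) * (qBinomialProd R m).coeff k := by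
  rw [qBinomialProd, prod_range_succ, ← qBinomialProd, mul_add, mul_one, Polynomial.coeff_add,
    mul_left_comm, Polynomial.coeff_C_mul, Polynomial.coeff_mul_X]

theorem coeff_qBinomialProd_of_lt {m k : ℕ} (h : m < k) : (qBinomialProd R m).coeff k = 0 := by
  induction m generalizing k with
  | zero => simp [qBinomialProd, Polynomial.coeff_one]; omega
  | succ m ih =>
    obtain ⟨k, rfl⟩ : ∃ k', k = k' + 1 := ⟨k - 1, by omega⟩
    rw [coeff_qBinomialProd_succ, ih (by omega), ih (by omega), mul_zero, add_zero]

/-- The q-binomial theorem, with the denominators of the Gaussian binomial cleared. -/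
theorem qPochhammer_mul_qPochhammer_mul_coeff_qBinomialProd : ∀ k l : ℕ,
    qPochhammer R k * qPochhammer R l * (qBinomialProd R (k + l)).coeff k =
      X ^ (k + 1).choose 2 * qPochhammer R (k + l)
  | 0, l => by simp [qPochhammer_zero, coeff_zero_qBinomialProd]
  | k + 1, 0 => by
    have ih := qPochhammer_mul_qPochhammer_mul_coeff_qBinomialProd k 0
    simp only [add_zero, qPochhammer_zero, mul_one] at ih ⊢
    rw [coeff_qBinomialProd_succ, coeff_qBinomialProd_of_lt (by omega), Nat.choose_succ_succ',
      Nat.choose_one_right, qPochhammer_succ]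
    linear_combination (1 - X ^ (k + 1) : R⟦X⟧) * X ^ (k + 1) * ih
  | k + 1, l + 1 => by
    have ih₁ := qPochhammer_mul_qPochhammer_mul_coeff_qBinomialProd (k + 1) l
    have ih₂ := qPochhammer_mul_qPochhammer_mul_coeff_qBinomialProd k (l + 1)
    rw [show k + 1 + l = k + l + 1 by ring] at ih₁
    rw [show k + (l + 1) = k + l + 1 by ring] at ih₂
    rw [show k + 1 + (l + 1) = k + l + 1 + 1 by ring, coeff_qBinomialProd_succ]
    rw [Nat.choose_succ_succ'] at ih₁ ⊢
    simp only [qPochhammer_succ, Nat.choose_one_right] at ih₁ ih₂ ⊢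
    linear_combination (1 - X ^ (l + 1) : R⟦X⟧) * ih₁ +
      (1 - X ^ (k + 1) : R⟦X⟧) * X ^ (k + l + 2) * ih₂

theorem finiteTripleProd_comp_C_mul_X (m : ℕ) :
    (finiteTripleProd R m).comp (Polynomial.C (X ^ m) * Polynomial.X) =
      Polynomial.C (X ^ m.choose 2) * qBinomialProd R (2 * m) := by
  have hleft : (qBinomialProd R m).comp (Polynomial.C (X ^ m) * Polynomial.X) =
      ∏ i ∈ range m, (1 + Polynomial.C (X ^ (m + i + 1)) * Polynomial.X) := by
    simp only [qBinomialProd, Polynomial.prod_comp, Polynomial.add_comp, Polynomial.mul_comp,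
      Polynomial.one_comp, Polynomial.C_comp, Polynomial.X_comp]
    refine prod_congr rfl fun i _ ↦ ?_
    rw [← mul_assoc, ← Polynomial.C_mul, ← pow_add, add_comm (i + 1), add_assoc]
  have hfactor : ∀ i ∈ range m, (Polynomial.C ((X : R⟦X⟧) ^ i) + Polynomial.X).comp
      (Polynomial.C (X ^ m) * Polynomial.X) =
        Polynomial.C (X ^ i) * (1 + Polynomial.C (X ^ (m - 1 - i + 1)) * Polynomial.X) := by
    intro i hi
    rw [Polynomial.add_comp, Polynomial.C_comp, Polynomial.X_comp, mul_add, mul_one,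
      ← mul_assoc, ← Polynomial.C_mul, ← pow_add]
    congr 4
    simp only [mem_range] at hi
    omega
  have hright : (∏ i ∈ range m, (Polynomial.C (X ^ i) + Polynomial.X)).comp
      (Polynomial.C (X ^ m) * Polynomial.X) =
        Polynomial.C (X ^ m.choose 2) * qBinomialProd R m := by
    rw [Polynomial.prod_comp, prod_congr rfl hfactor, prod_mul_distrib, ← map_prod,
      prod_pow_eq_pow_sum, sum_range_id, ← Nat.choose_two_right, qBinomialProd,
      prod_range_reflect (fun i ↦ 1 + Polynomial.C (X ^ (i + 1)) * Polynomial.X)]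
  rw [finiteTripleProd, Polynomial.mul_comp, hleft, hright, two_mul, qBinomialProd, qBinomialProd,
    prod_range_add]
  ring

theorem coeff_finiteTripleProd_mul_X_pow (m k : ℕ) :
    (finiteTripleProd R m).coeff k * X ^ (m * k) =
      X ^ m.choose 2 * (qBinomialProd R (2 * m)).coeff k := by
  rw [pow_mul, ← Polynomial.comp_C_mul_X_coeff, finiteTripleProd_comp_C_mul_X,
    Polynomial.coeff_C_mul]

theorem coeff_finiteTripleProd_of_lt {m k : ℕ} (h : 2 * m < k) :
    (finiteTripleProd R m).coeff k = 0 := by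
  apply X_pow_mul_cancel (k := m * k)
  rw [mul_comm, coeff_finiteTripleProd_mul_X_pow, coeff_qBinomialProd_of_lt h, mul_zero, mul_zero]

theorem neg_derivative_eval_neg_one {S : Type*} [CommRing S] {p : Polynomial S} {d : ℕ}
    (hd : p.natDegree < d) :
    -p.derivative.eval (-1) = ∑ k ∈ range d, (-1) ^ k * (k : S) * p.coeff k := by
  rw [Polynomial.derivative_eval, Polynomial.sum_over_range' _ (by simp) d hd, ← sum_neg_distrib]
  refine sum_congr rfl fun k _ ↦ ?_
  rcases k with _ | k
  · simp
  · simp only [Nat.add_sub_cancel, pow_succ]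
    ring

theorem derivative_finiteTripleProd_eval_neg_one (n : ℕ) :
    (finiteTripleProd R (n + 1)).derivative.eval (-1) =
      (-1) ^ n * qPochhammer R (n + 1) * qPochhammer R n := by
  have hleft : (qBinomialProd R (n + 1)).eval (-1) = qPochhammer R (n + 1) := by
    simp [qBinomialProd, qPochhammer, Polynomial.eval_prod, sub_eq_add_neg]
  have hright : (∏ i ∈ range n, (Polynomial.C (X ^ (i + 1)) + Polynomial.X)).eval (-1) =
      (-1) ^ n * qPochhammer R n := by
    have := pow_card_mul_prod (s := range n) (f := fun i ↦ 1 - (X : R⟦X⟧) ^ (i + 1)) (b := -1)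
    rw [card_range] at this
    rw [Polynomial.eval_prod, qPochhammer, this]
    exact prod_congr rfl fun i _ ↦ by simp; ring
  rw [finiteTripleProd, prod_range_succ', pow_zero, map_one]
  simp only [Polynomial.derivative_mul, Polynomial.derivative_add, Polynomial.derivative_one,
    Polynomial.derivative_X, Polynomial.eval_add, Polynomial.eval_mul, Polynomial.eval_one,
    Polynomial.eval_X, Polynomial.eval_zero, hleft, hright]
  ring

theorem sum_neg_one_pow_mul_coeff_finiteTripleProd (n : ℕ) :
    ∑ k ∈ range (2 * (n + 1) + 1), (-1) ^ k * (k : R⟦X⟧) * (finiteTripleProd R (n + 1)).coeff k =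
      (-1) ^ (n + 1) * qPochhammer R (n + 1) * qPochhammer R n := by
  have hdeg : (finiteTripleProd R (n + 1)).natDegree < 2 * (n + 1) + 1 :=
    Nat.lt_succ_of_le (Polynomial.natDegree_le_iff_coeff_eq_zero.mpr fun k hk ↦
      coeff_finiteTripleProd_of_lt (by exact_mod_cast hk))
  rw [← neg_derivative_eval_neg_one hdeg, derivative_finiteTripleProd_eval_neg_one]
  ring

/-- By the q-binomial theorem `(q;q)ₖ (q;q)ₗ tₖ = qᵉ (q;q)_{2m}` exactly, where `tₖ` is the
coefficient, and `(q;q)ₖ (q;q)ₗ ≡ (q;q)_{2m}²` modulo `q^(min k l + 1)`. -/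
theorem qPochhammer_mul_coeff_finiteTripleProd_smodEq {m k l e : ℕ} (hkl : k + l = 2 * m)
    (he : m.choose 2 + (k + 1).choose 2 = m * k + e) :
    qPochhammer R (2 * m) * (finiteTripleProd R m).coeff k ≡ X ^ e
      [SMOD Ideal.span {(X : R⟦X⟧) ^ (e + (min k l + 1))}] := by
  have hexact : qPochhammer R k * qPochhammer R l * (finiteTripleProd R m).coeff k =
      X ^ e * qPochhammer R (2 * m) := by
    apply X_pow_mul_cancel (k := m * k)
    calc X ^ (m * k) * (qPochhammer R k * qPochhammer R l * (finiteTripleProd R m).coeff k)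
        = qPochhammer R k * qPochhammer R l *
            ((finiteTripleProd R m).coeff k * X ^ (m * k)) := by ring
      _ = X ^ (m.choose 2 + (k + 1).choose 2) * qPochhammer R (k + l) := by
        rw [coeff_finiteTripleProd_mul_X_pow, ← hkl, mul_left_comm,
          qPochhammer_mul_qPochhammer_mul_coeff_qBinomialProd, pow_add]
        ring
      _ = X ^ (m * k) * (X ^ e * qPochhammer R (2 * m)) := by rw [he, hkl, pow_add, mul_assoc]
  refine smodEq_X_pow_of_mul_eq ((isUnit_qPochhammer k).mul (isUnit_qPochhammer l))
    (B := qPochhammer R (2 * m) ^ 2) (by linear_combination qPochhammer R (2 * m) * hexact) ?_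
  have hk := qPochhammer_smodEq_of_le (R := R) (min_le_left k l)
  have hl := qPochhammer_smodEq_of_le (R := R) (min_le_right k l)
  have hN := qPochhammer_smodEq_of_le (R := R) (show min k l ≤ 2 * m by omega)
  rw [sq]
  exact (hk.mul hl).trans (hN.mul hN).symm

theorem two_mul_choose_two_succ (a : ℕ) : 2 * (a + 1).choose 2 = (a + 1) * a := by
  have := Nat.add_one_mul_choose_eq a 1
  simp only [Nat.choose_one_right] at this
  linarith

theorem le_choose_two_succ (j : ℕ) : j ≤ (j + 1).choose 2 := by
  have := two_mul_choose_two_succ j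
  nlinarith

theorem choose_two_add_choose_two_add_succ (m j : ℕ) :
    m.choose 2 + (m + j + 1).choose 2 = m * (m + j) + (j + 1).choose 2 := by
  apply Nat.eq_of_mul_eq_mul_left two_pos
  rcases m with _ | m
  · simp
  · simp only [mul_add, two_mul_choose_two_succ]
    ring

theorem add_succ_choose_two_add_choose_two (j k : ℕ) :
    (j + k + 1).choose 2 + (k + 1).choose 2 = (j + k + 1) * k + (j + 1).choose 2 := by
  apply Nat.eq_of_mul_eq_mul_left two_pos
  simp only [mul_add, two_mul_choose_two_succ]
  ring

theorem qPochhammer_pow_three_smodEq_sum (n : ℕ) :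
    qPochhammer R (2 * (n + 1)) ^ 3 ≡ (-1) ^ (n + 1) * ∑ k ∈ range (2 * (n + 1) + 1),
      (-1) ^ k * (k : R⟦X⟧) * (qPochhammer R (2 * (n + 1)) * (finiteTripleProd R (n + 1)).coeff k)
      [SMOD Ideal.span {(X : R⟦X⟧) ^ (n + 1)}] := by
  have h₁ := smodEq_X_pow_mono (R := R) (Nat.le_succ (n + 1))
    (qPochhammer_smodEq_of_le (show n + 1 ≤ 2 * (n + 1) by omega))
  have h₂ := qPochhammer_smodEq_of_le (R := R) (show n ≤ 2 * (n + 1) by omega)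
  have hsign : ((-1 : R⟦X⟧) ^ (n + 1)) * (-1) ^ (n + 1) = 1 := by rw [← mul_pow]; norm_num
  have hsum : (-1) ^ (n + 1) * ∑ k ∈ range (2 * (n + 1) + 1), (-1) ^ k * (k : R⟦X⟧) *
      (qPochhammer R (2 * (n + 1)) * (finiteTripleProd R (n + 1)).coeff k) =
        qPochhammer R (2 * (n + 1)) * (qPochhammer R (n + 1) * qPochhammer R n) := by
    simp_rw [mul_left_comm _ (qPochhammer R (2 * (n + 1))), ← mul_sum,
      sum_neg_one_pow_mul_coeff_finiteTripleProd]
    linear_combination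
      qPochhammer R (2 * (n + 1)) * qPochhammer R (n + 1) * qPochhammer R n * hsign
  rw [hsum, pow_three]
  exact (SModEq.refl _).mul (h₁.mul h₂)

theorem signed_coeff_pair_smodEq (j k : ℕ) :
    (-1) ^ k * (k : R⟦X⟧) * (qPochhammer R (2 * (j + k + 1)) *
        (finiteTripleProd R (j + k + 1)).coeff k) +
      (-1) ^ (j + k + 1 + j) * ((j + k + 1 + j : ℕ) : R⟦X⟧) * (qPochhammer R (2 * (j + k + 1)) *
        (finiteTripleProd R (j + k + 1)).coeff (j + k + 1 + j)) ≡
      (-1) ^ (j + k + 1) * (C ((-1) ^ j * (2 * j + 1) : R) * X ^ (j + 1).choose 2)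
      [SMOD Ideal.span {(X : R⟦X⟧) ^ (j + k + 1)}] := by
  have htri := le_choose_two_succ j
  have hlow := smodEq_X_pow_mono (a := j + k + 1) (by omega) <|
    qPochhammer_mul_coeff_finiteTripleProd_smodEq (R := R) (l := j + k + 1 + 1 + j)
      (by omega) (add_succ_choose_two_add_choose_two j k)
  have hhigh := smodEq_X_pow_mono (a := j + k + 1) (by omega) <|
    qPochhammer_mul_coeff_finiteTripleProd_smodEq (R := R) (l := k + 1)
      (by omega) (choose_two_add_choose_two_add_succ (j + k + 1) j)
  have hsq : ((-1 : R⟦X⟧) ^ j) * (-1) ^ j = 1 := by rw [← mul_pow]; norm_num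
  refine ((SModEq.refl _).mul hlow).add ((SModEq.refl _).mul hhigh) |>.trans ?_
  rw [SModEq]
  congr 1
  push_cast
  simp only [map_mul, map_pow, map_neg, map_one, map_add, map_ofNat, map_natCast]
  linear_combination (-(-1) ^ k * X ^ (j + 1).choose 2 * (k : R⟦X⟧)) * hsq

theorem qPochhammer_mul_coeff_finiteTripleProd_top_smodEq (m : ℕ) :
    qPochhammer R (2 * m) * (finiteTripleProd R m).coeff (2 * m) ≡ 0
      [SMOD Ideal.span {(X : R⟦X⟧) ^ m}] := by
  have htri := le_choose_two_succ m
  have hcoeff := smodEq_X_pow_mono (a := m) (by omega) <|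
    qPochhammer_mul_coeff_finiteTripleProd_smodEq (R := R) (m := m) (k := 2 * m) (l := 0)
      (e := (m + 1).choose 2) (by omega)
      (by rw [two_mul, choose_two_add_choose_two_add_succ])
  refine hcoeff.trans ?_
  rw [SModEq.sub_mem, sub_zero, Ideal.mem_span_singleton]
  exact pow_dvd_pow _ htri

theorem qPochhammer_pow_three_smodEq_jacobiSum (n : ℕ) :
    qPochhammer R (2 * (n + 1)) ^ 3 ≡ jacobiSum R (n + 1)
      [SMOD Ideal.span {(X : R⟦X⟧) ^ (n + 1)}] := by
  have hcube := qPochhammer_pow_three_smodEq_sum (R := R) n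
  generalize n + 1 = m at hcube ⊢
  set f : ℕ → R⟦X⟧ := fun k ↦
    (-1) ^ k * (k : R⟦X⟧) * (qPochhammer R (2 * m) * (finiteTripleProd R m).coeff k)
  have hsplit : ∑ k ∈ range (2 * m + 1), f k =
      ∑ j ∈ range m, (f (m - 1 - j) + f (m + j)) + f (2 * m) := by
    rw [show 2 * m + 1 = m + (m + 1) by ring, sum_range_add, sum_range_succ (fun x ↦ f (m + x)) m,
      sum_add_distrib, ← sum_range_reflect f m, add_assoc, two_mul]
  have hpair (j : ℕ) (hj : j ∈ range m) : f (m - 1 - j) + f (m + j) ≡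
      (-1) ^ m * (C ((-1) ^ j * (2 * j + 1) : R) * X ^ (j + 1).choose 2)
      [SMOD Ideal.span {(X : R⟦X⟧) ^ m}] := by
    obtain ⟨k, rfl⟩ : ∃ k, m = j + k + 1 := ⟨m - 1 - j, by simp only [mem_range] at hj; omega⟩
    rw [show j + k + 1 - 1 - j = k by omega]
    exact signed_coeff_pair_smodEq j k
  have htop : f (2 * m) ≡ 0 [SMOD Ideal.span {(X : R⟦X⟧) ^ m}] := by
    simpa [f] using (SModEq.refl ((-1) ^ (2 * m) * ((2 * m : ℕ) : R⟦X⟧))).mul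
      (qPochhammer_mul_coeff_finiteTripleProd_top_smodEq m)
  have hsign : ((-1 : R⟦X⟧) ^ m) * (-1) ^ m = 1 := by rw [← mul_pow]; norm_num
  calc qPochhammer R (2 * m) ^ 3
      ≡ (-1) ^ m * ∑ k ∈ range (2 * m + 1), f k [SMOD Ideal.span {(X : R⟦X⟧) ^ m}] := hcube
    _ = (-1) ^ m * (∑ j ∈ range m, (f (m - 1 - j) + f (m + j)) + f (2 * m)) := by rw [hsplit]
    _ ≡ (-1) ^ m * (∑ j ∈ range m,
          (-1) ^ m * (C ((-1) ^ j * (2 * j + 1) : R) * X ^ (j + 1).choose 2) + 0)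
          [SMOD Ideal.span {(X : R⟦X⟧) ^ m}] :=
      (SModEq.refl _).mul ((SModEq.sum hpair).add htop)
    _ = jacobiSum R m := by rw [add_zero, ← mul_sum, ← mul_assoc, hsign, one_mul, jacobiSum]

theorem card_restricted_le_eq_card {n N : ℕ} (h : n ≤ N) :
    #(Nat.Partition.restricted n (· ≤ N)) = Fintype.card n.Partition := by
  rw [Nat.Partition.restricted, filter_true_of_mem, card_univ]
  intro p _ i hi
  exact ((Multiset.le_sum_of_mem hi).trans_eq p.parts_sum).trans h

theorem restrictedPartitionSeries_mul_qPochhammer (N : ℕ) :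
    PowerSeries.mk (fun n ↦ (#(Nat.Partition.restricted n (· ≤ N)) : R)) * qPochhammer R N = 1 := by
  let _ : TopologicalSpace R := ⊥
  have : DiscreteTopology R := ⟨rfl⟩
  rw [← (Nat.Partition.hasProd_powerSeriesMk_card_restricted R (· ≤ N)).tprod_eq,
    tprod_eq_prod (s := range N) (fun i hi ↦ if_neg (by simpa using hi)), qPochhammer,
    ← prod_mul_distrib]
  refine prod_eq_one fun i hi ↦ ?_
  rw [if_pos (by simpa [Nat.add_one_le_iff] using hi)]
  simp_rw [pow_mul]
  exact WithPiTopology.tsum_pow_mul_one_sub_of_constantCoeff_eq_zero (by simp)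

end CommRing

section Residues

variable {R : Type*}

def SupportedInResidues [Semiring R] (m : ℕ) (S : Finset (ZMod m)) (f : R⟦X⟧) : Prop :=
  ∀ i : ℕ, (i : ZMod m) ∉ S → coeff i f = 0

theorem SupportedInResidues.mul [Semiring R] {m : ℕ} {S T : Finset (ZMod m)}
    {f g : R⟦X⟧} (hf : SupportedInResidues m S f) (hg : SupportedInResidues m T g) :
    SupportedInResidues m (S + T) (f * g) := by
  intro i hi
  rw [coeff_mul]
  refine sum_eq_zero fun ⟨a, b⟩ hab ↦ ?_
  rw [HasAntidiagonal.mem_antidiagonal] at hab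
  by_cases ha : (a : ZMod m) ∈ S
  · have hb : (b : ZMod m) ∉ T := fun hb ↦ hi (by rw [← hab, Nat.cast_add]; exact add_mem_add ha hb)
    rw [hg b hb, mul_zero]
  · rw [hf a ha, zero_mul]

theorem supportedInResidues_expand [CommRing R] {m : ℕ} (hm : m ≠ 0) (f : R⟦X⟧) :
    SupportedInResidues m {0} (expand m hm f) := by
  intro i hi
  refine coeff_expand_of_not_dvd m hm f fun hdvd ↦ hi ?_
  rw [mem_singleton, ZMod.natCast_eq_zero_iff]
  exact hdvd

theorem supportedInResidues_jacobiSum (n : ℕ) :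
    SupportedInResidues 5 {0, 1} (jacobiSum (ZMod 5) n) := by
  have hresidue : ∀ x t : ZMod 5, 2 * t = x * (x + 1) → t ∉ ({0, 1} : Finset (ZMod 5)) →
      2 * x + 1 = 0 := by decide
  intro i hi
  rw [jacobiSum, map_sum]
  refine sum_eq_zero fun j _ ↦ ?_
  rw [coeff_C_mul_X_pow]
  split_ifs with h
  · subst h
    have htwice : (2 : ZMod 5) * ((j + 1).choose 2 : ℕ) = j * (j + 1) := by
      have := congrArg (Nat.cast : ℕ → ZMod 5) (two_mul_choose_two_succ j)
      push_cast at this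
      rw [this]
      ring
    rw [hresidue _ _ htwice hi, mul_zero]
  · rfl

end Residues

theorem pow_eq_expand {p : ℕ} (hp : p.Prime) (f : (ZMod p)⟦X⟧) :
    f ^ p = expand p hp.ne_zero f := by
  have : Fact p.Prime := ⟨hp⟩
  rw [← MvPowerSeries.map_frobenius_expand p hp.ne_zero, ZMod.frobenius_zmod,
    MvPowerSeries.map_id]
  rfl

theorem coeff_eq_zero_of_mul_eq_one_of_pow_three_smodEq {P E : (ZMod 5)⟦X⟧} {T : ℕ}
    (hPE : P * E = 1)
    (hE : E ^ 3 ≡ jacobiSum (ZMod 5) (T + 1) [SMOD Ideal.span {(X : (ZMod 5)⟦X⟧) ^ (T + 1)}])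
    (hT : (T : ZMod 5) = 4) : coeff T P = 0 := by
  have h5 : Nat.Prime 5 := by norm_num
  set Q := expand 5 h5.ne_zero (P ^ 2)
  have hQ : Q * E ^ 10 = 1 := by
    rw [show E ^ 10 = (E ^ 5) ^ 2 by ring, pow_eq_expand h5 E, ← map_pow, ← map_mul, ← mul_pow,
      hPE, one_pow, map_one]
  have hP : P = E ^ 9 * Q := by linear_combination (-P) * hQ + (Q * E ^ 9) * hPE
  have hcong : E ^ 9 * Q ≡ jacobiSum (ZMod 5) (T + 1) ^ 3 * Q
      [SMOD Ideal.span {(X : (ZMod 5)⟦X⟧) ^ (T + 1)}] := by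
    rw [show E ^ 9 = (E ^ 3) ^ 3 by ring]
    exact (hE.pow 3).mul (SModEq.refl _)
  have hsupp := (((supportedInResidues_jacobiSum (T + 1)).mul
    (supportedInResidues_jacobiSum (T + 1))).mul (supportedInResidues_jacobiSum (T + 1))).mul
      (supportedInResidues_expand h5.ne_zero (P ^ 2))
  rw [hP, coeff_eq_of_smodEq hcong (Nat.lt_succ_self T), pow_three, ← mul_assoc]
  exact hsupp T (by rw [hT]; decide)

end Ramanujan

/-- Ramanujan's congruence: `p(5n+4) ≡ 0 (mod 5)`. -/
theorem ramanujan_mod_five (n : ℕ) :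
    5 ∣ Fintype.card (Nat.Partition (5 * n + 4)) := by
  have hcoeff := Ramanujan.coeff_eq_zero_of_mul_eq_one_of_pow_three_smodEq
    (Ramanujan.restrictedPartitionSeries_mul_qPochhammer (2 * (5 * n + 4 + 1)))
    (Ramanujan.qPochhammer_pow_three_smodEq_jacobiSum (5 * n + 4))
    (by simp [show (5 : ZMod 5) = 0 from rfl])
  rwa [coeff_mk, Ramanujan.card_restricted_le_eq_card (by omega),
    ZMod.natCast_eq_zero_iff] at hcoeff
end

section
/- Define c₅(n) by ∑_{n≥0} c₅(n) qⁿ = ∏_{k≥1} (1−q^{5k})⁵ / (1−q^k). Then c₅(n) is even whenever n ≡ 2 (mod 10) or n ≡ 6 (mod 10). -/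
/-!
Modulo 2, `(1 - q^{5k})^5 ≡ (1 - q^{5k}) (1 - q^{20k})`, and Euler's identity
`∏ (1 + q^k) · ∏_{m odd} (1 - q^m) = 1`, used at `q` and at `q^5`, turns
`∑ c₅(n) qⁿ ≡ ∏ (1 + q^{5k}) (1 + q^{20k}) / ∏ (1 + q^k)` into
`∏ (1 + q^{20k}) · ∏_{m odd, 5 ∤ m} (1 + q^m)`. By the Jacobi triple product this is
`θ₄ θ₂` with `θ_r = ∑_{j ∈ ℤ} q^{5j² + rj}`, so `c₅(n)` has the parity of the number of
`(a, b) ∈ ℤ²` with `5a² + 4a + 5b² + 2b = n`. With `u = 10a + 4`, `v = 10b + 2` this equation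
reads `u² + v² = 20(n + 1)`; when `n ≡ 1, 2 (mod 5)` a reflection of the plane preserves its
solution set, and it has no fixed solution when `n` is even.

All identities are used truncated, as congruences modulo `X^{N+1}` between finite products; the
triple product comes from its finite form with Gaussian binomial coefficients.
-/

open PowerSeries Finset

theorem SModEq.of_isUnit_mul {A : Type*} [CommRing A] {I : Ideal A} {u x y : A} (hu : IsUnit u)
    (h : u * x ≡ u * y [SMOD I]) : x ≡ y [SMOD I] := by
  obtain ⟨v, rfl⟩ := hu
  simpa [← mul_assoc] using (SModEq.refl (↑v⁻¹ : A)).mul h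

theorem Finset.prod_range_smodEq_of_le {A : Type*} [CommRing A] {I : Ideal A} {f : ℕ → A}
    {m n : ℕ} (hmn : m ≤ n) (h : ∀ k ∈ Ico m n, f k ≡ 1 [SMOD I]) :
    ∏ k ∈ range n, f k ≡ ∏ k ∈ range m, f k [SMOD I] := by
  rw [← prod_range_mul_prod_Ico f hmn]
  simpa using (SModEq.refl (∏ k ∈ range m, f k)).mul (SModEq.prod h)

theorem Finset.prod_Icc_one_eq_prod_range {M : Type*} [CommMonoid M] (f : ℕ → M) (N : ℕ) :
    ∏ k ∈ Icc 1 N, f k = ∏ k ∈ range N, f (k + 1) := by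
  induction N with
  | zero => simp
  | succ N ih => rw [prod_Icc_succ_top (by omega), ih, prod_range_succ]

theorem Finset.even_card_of_involution {α : Type*} {s : Finset α} (g : α → α)
    (hmem : ∀ a ∈ s, g a ∈ s) (hinv : ∀ a ∈ s, g (g a) = a) (hfix : ∀ a ∈ s, g a ≠ a) :
    Even #s := by
  rw [← ZMod.natCast_eq_zero_iff_even, card_eq_sum_ones, Nat.cast_sum, Nat.cast_one]
  exact sum_involution (fun a _ ↦ g a) (fun _ _ ↦ rfl) (fun a ha _ ↦ hfix a ha) hmem hinv

theorem sum_range_mul_of_recurrence {R : Type*} [CommRing R] {g g' α β : ℕ → R} {n : ℕ}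
    (h₀ : g' 0 = β 0 * g 0) (hs : ∀ k, g' (k + 1) = α k * g k + β (k + 1) * g (k + 1))
    (hn : g (n + 1) = 0) (w : ℕ → R) :
    ∑ k ∈ range (n + 2), g' k * w k =
      ∑ k ∈ range (n + 1), g k * (β k * w k + α k * w (k + 1)) := by
  have hβ := sum_range_succ' (fun k ↦ β k * g k * w k) (n + 1)
  rw [sum_range_succ, hn] at hβ
  have e₁ (k : ℕ) : (α k * g k + β (k + 1) * g (k + 1)) * w (k + 1) =
      g k * (α k * w (k + 1)) + β (k + 1) * g (k + 1) * w (k + 1) := by ring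
  have e₂ (k : ℕ) : g k * (β k * w k + α k * w (k + 1)) =
      β k * g k * w k + g k * (α k * w (k + 1)) := by ring
  rw [sum_range_succ', h₀]
  simp only [hs, e₁, e₂, sum_add_distrib]
  linear_combination -hβ

section QBinomial

variable {R : Type*} [CommRing R] (q : R)

def qChoose : ℕ → ℕ → R
  | _, 0 => 1
  | 0, _ + 1 => 0
  | n + 1, k + 1 => qChoose n k + q ^ (k + 1) * qChoose n (k + 1)

def qPoch (n : ℕ) : R := ∏ i ∈ range n, (1 - q ^ (i + 1))

@[simp] theorem qChoose_zero_right (n : ℕ) : qChoose q n 0 = 1 := by cases n <;> rfl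

theorem qChoose_succ_succ (n k : ℕ) :
    qChoose q (n + 1) (k + 1) = qChoose q n k + q ^ (k + 1) * qChoose q n (k + 1) := rfl

theorem qChoose_eq_zero_of_lt {n k : ℕ} (h : n < k) : qChoose q n k = 0 := by
  induction n generalizing k with
  | zero => obtain ⟨k, rfl⟩ := Nat.exists_eq_succ_of_ne_zero h.ne'; rfl
  | succ n ih =>
    obtain ⟨k, rfl⟩ := Nat.exists_eq_succ_of_ne_zero (Nat.ne_zero_of_lt h)
    rw [qChoose_succ_succ, ih (by omega), ih (by omega), mul_zero, add_zero]

@[simp] theorem qChoose_self (n : ℕ) : qChoose q n n = 1 := by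
  induction n with
  | zero => rfl
  | succ n ih =>
    rw [qChoose_succ_succ, ih, qChoose_eq_zero_of_lt q n.lt_succ_self, mul_zero, add_zero]

@[simp] theorem qPoch_zero : qPoch q 0 = 1 := prod_range_zero _

theorem qPoch_succ (n : ℕ) : qPoch q (n + 1) = qPoch q n * (1 - q ^ (n + 1)) :=
  prod_range_succ _ _

theorem isUnit_qPoch (hq : ∀ i, IsUnit (1 - q ^ (i + 1))) (n : ℕ) : IsUnit (qPoch q n) :=
  IsUnit.prod_iff.2 fun i _ ↦ hq i

theorem qChoose_mul_qPoch_mul_qPoch {n k : ℕ} (h : k ≤ n) :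
    qChoose q n k * qPoch q k * qPoch q (n - k) = qPoch q n := by
  induction n generalizing k with
  | zero =>
    obtain rfl : k = 0 := by omega
    simp
  | succ n ih =>
    rcases k with _ | k
    · simp
    obtain rfl | hk := eq_or_lt_of_le (Nat.le_of_succ_le_succ h)
    · simp
    obtain ⟨m, rfl⟩ : ∃ m, n = k + 1 + m := ⟨n - (k + 1), by omega⟩
    have h₁ := ih (k := k) (by omega)
    have h₂ := ih (k := k + 1) (by omega)
    rw [show k + 1 + m - k = m + 1 by omega] at h₁
    rw [show k + 1 + m - (k + 1) = m by omega] at h₂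
    rw [show k + 1 + m + 1 - (k + 1) = m + 1 by omega, qChoose_succ_succ]
    simp only [qPoch_succ] at h₁ h₂ ⊢
    linear_combination (1 - q ^ (k + 1)) * h₁ + q ^ (k + 1) * (1 - q ^ (m + 1)) * h₂

theorem qChoose_succ_succ' (hq : ∀ i, IsUnit (1 - q ^ (i + 1))) (n k : ℕ) :
    qChoose q (n + 1) (k + 1) = q ^ (n - k) * qChoose q n k + qChoose q n (k + 1) := by
  rcases lt_trichotomy k n with hk | rfl | hk
  · obtain ⟨m, rfl⟩ : ∃ m, n = k + 1 + m := ⟨n - (k + 1), by omega⟩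
    refine ((isUnit_qPoch q hq (k + 1)).mul (isUnit_qPoch q hq (m + 1))).mul_left_injective ?_
    have h₀ := qChoose_mul_qPoch_mul_qPoch q (n := k + 1 + m + 1) (k := k + 1) (by omega)
    have h₁ := qChoose_mul_qPoch_mul_qPoch q (n := k + 1 + m) (k := k) (by omega)
    have h₂ := qChoose_mul_qPoch_mul_qPoch q (n := k + 1 + m) (k := k + 1) (by omega)
    rw [show k + 1 + m + 1 - (k + 1) = m + 1 by omega] at h₀
    rw [show k + 1 + m - k = m + 1 by omega] at h₁
    rw [show k + 1 + m - (k + 1) = m by omega] at h₂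
    rw [show k + 1 + m - k = m + 1 by omega]
    simp only [qPoch_succ] at h₀ h₁ h₂ ⊢
    linear_combination h₀ - q ^ (m + 1) * (1 - q ^ (k + 1)) * h₁ - (1 - q ^ (m + 1)) * h₂
  · simp [qChoose_eq_zero_of_lt q (Nat.lt_succ_self k)]
  · simp [qChoose_eq_zero_of_lt q hk, qChoose_eq_zero_of_lt q (Nat.lt_succ_of_lt hk),
      qChoose_eq_zero_of_lt q (Nat.succ_lt_succ hk)]

theorem sum_range_qChoose_succ_mul (n : ℕ) (w : ℕ → R) :
    ∑ k ∈ range (n + 2), qChoose q (n + 1) k * w k =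
      ∑ k ∈ range (n + 1), qChoose q n k * (q ^ k * w k + w (k + 1)) := by
  simpa using sum_range_mul_of_recurrence (α := 1) (β := fun k ↦ q ^ k) (by simp)
    (fun k ↦ by simp [qChoose_succ_succ]) (qChoose_eq_zero_of_lt q n.lt_succ_self) w

theorem sum_range_qChoose_succ_mul' (hq : ∀ i, IsUnit (1 - q ^ (i + 1))) (n : ℕ) (w : ℕ → R) :
    ∑ k ∈ range (n + 2), qChoose q (n + 1) k * w k =
      ∑ k ∈ range (n + 1), qChoose q n k * (w k + q ^ (n - k) * w (k + 1)) := by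
  simpa using sum_range_mul_of_recurrence (α := fun k ↦ q ^ (n - k)) (β := 1) (by simp)
    (fun k ↦ by simp [qChoose_succ_succ' q hq]) (qChoose_eq_zero_of_lt q n.lt_succ_self) w

theorem sum_range_qChoose_add_two_mul (hq : ∀ i, IsUnit (1 - q ^ (i + 1))) (n : ℕ)
    (w : ℕ → R) :
    ∑ k ∈ range (n + 3), qChoose q (n + 2) k * w k =
      ∑ k ∈ range (n + 1), qChoose q n k *
        (q ^ k * w k + (1 + q ^ (n + 1)) * w (k + 1) + q ^ (n - k) * w (k + 2)) := by
  rw [sum_range_qChoose_succ_mul' q hq, sum_range_qChoose_succ_mul]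
  refine sum_congr rfl fun k hk ↦ ?_
  obtain ⟨m, rfl⟩ : ∃ m, n = k + m := ⟨n - k, by have := mem_range.1 hk; omega⟩
  rw [show k + m + 1 - k = m + 1 by omega, show k + m + 1 - (k + 1) = m by omega,
    show k + m - k = m by omega]
  ring

end QBinomial

/-- Nonnegative, hence not truncated by `toNat`, whenever `r ≤ a` (`natCast_thetaExp`). -/
def thetaExp (a r : ℕ) (j : ℤ) : ℕ := (a * j ^ 2 + r * j).toNat

theorem natCast_thetaExp {a r : ℕ} (hr : r ≤ a) (j : ℤ) :
    (thetaExp a r j : ℤ) = a * j ^ 2 + r * j := by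
  refine Int.toNat_of_nonneg ?_
  rcases le_or_gt 0 j with hj | hj
  · positivity
  · have : (a : ℤ) * j + r ≤ 0 := by nlinarith
    nlinarith

theorem natAbs_le_thetaExp {a r : ℕ} (h : r < a) (j : ℤ) : j.natAbs ≤ thetaExp a r j := by
  zify
  rw [natCast_thetaExp h.le]
  have ha : (r : ℤ) + 1 ≤ a := by exact_mod_cast h
  rcases le_or_gt 0 j with hj | hj
  · rw [abs_of_nonneg hj]
    nlinarith [Int.le_self_sq j]
  · rw [abs_of_neg hj]
    have : 0 ≤ j * (j + 1) := mul_nonneg_of_nonpos_of_nonpos hj.le (by omega)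
    nlinarith [Int.le_self_sq (-j)]

theorem mem_filter_thetaExp_iff {n : ℕ} {p : ℤ × ℤ} :
    p ∈ {p ∈ Icc (-n : ℤ) n ×ˢ Icc (-n : ℤ) n | thetaExp 5 4 p.1 + thetaExp 5 2 p.2 = n} ↔
      5 * p.1 ^ 2 + 4 * p.1 + 5 * p.2 ^ 2 + 2 * p.2 = n := by
  have h₁ := natAbs_le_thetaExp (by norm_num : 4 < 5) p.1
  have h₂ := natAbs_le_thetaExp (by norm_num : 2 < 5) p.2
  have key : thetaExp 5 4 p.1 + thetaExp 5 2 p.2 = n ↔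
      5 * p.1 ^ 2 + 4 * p.1 + 5 * p.2 ^ 2 + 2 * p.2 = n := by
    rw [← Nat.cast_inj (R := ℤ), Nat.cast_add, natCast_thetaExp (by norm_num),
      natCast_thetaExp (by norm_num), ← add_assoc]
    norm_num
  rw [mem_filter, mem_product, mem_Icc, mem_Icc, ← key]
  constructor
  · exact And.right
  · intro h
    exact ⟨⟨⟨by omega, by omega⟩, by omega, by omega⟩, h⟩

/-- In the coordinates `u = 10a + 4`, `v = 10b + 2` the two involutions are the reflections
`(u, v) ↦ ± ((3v - 4u) / 5, (3u + 4v) / 5)`; which one preserves `ℤ²` depends on `n mod 5`. -/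
theorem even_card_filter_thetaExp {n : ℕ} (hn : n % 10 = 2 ∨ n % 10 = 6) :
    Even #{p ∈ Icc (-n : ℤ) n ×ˢ Icc (-n : ℤ) n | thetaExp 5 4 p.1 + thetaExp 5 2 p.2 = n} := by
  have h5 (a b : ℤ) (h : 5 * a ^ 2 + 4 * a + 5 * b ^ 2 + 2 * b = n) :
      ∃ s, (n : ℤ) = 4 * a + 2 * b + 5 * s := ⟨a ^ 2 + b ^ 2, by linear_combination -h⟩
  rcases hn with hn | hn
  · refine even_card_of_involution (fun p ↦
        (3 * ((p.2 + 2 * p.1 - 1) / 5) - 2 * p.1, 4 * ((p.2 + 2 * p.1 - 1) / 5) - p.1 + 1))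
      ?_ ?_ ?_
    all_goals
      rintro ⟨a, b⟩ h
      rw [mem_filter_thetaExp_iff] at h
      dsimp only at h ⊢
      obtain ⟨s, hs⟩ := h5 a b h
      obtain ⟨t, ht⟩ : ∃ t, b = 5 * t + 1 - 2 * a := ⟨(b + 2 * a - 1) / 5, by omega⟩
      rw [show (b + 2 * a - 1) / 5 = t by omega]
    · rw [mem_filter_thetaExp_iff]
      linear_combination h - (5 * (b + 5 * t + 1 - 2 * a) + 2) * ht
    · simp only [Prod.mk.injEq]
      omega
    · intro hfix
      simp only [Prod.mk.injEq] at hfix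
      obtain ⟨rfl, rfl⟩ : t = a ∧ b = 3 * t + 1 := by omega
      have : (n : ℤ) = 2 * (25 * t ^ 2 + 20 * t + 3) + 1 := by linear_combination -h
      omega
  · refine even_card_of_involution (fun p ↦
        (2 * p.1 - 3 * ((p.2 + 2 * p.1 - 3) / 5) - 2, p.1 - 4 * ((p.2 + 2 * p.1 - 3) / 5) - 3))
      ?_ ?_ ?_
    all_goals
      rintro ⟨a, b⟩ h
      rw [mem_filter_thetaExp_iff] at h
      dsimp only at h ⊢
      obtain ⟨s, hs⟩ := h5 a b h
      obtain ⟨t, ht⟩ : ∃ t, b = 5 * t + 3 - 2 * a := ⟨(b + 2 * a - 3) / 5, by omega⟩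
      rw [show (b + 2 * a - 3) / 5 = t by omega]
    · rw [mem_filter_thetaExp_iff]
      linear_combination h - (5 * (b + 5 * t + 3 - 2 * a) + 2) * ht
    · simp only [Prod.mk.injEq]
      omega
    · intro hfix
      simp only [Prod.mk.injEq] at hfix
      obtain ⟨rfl, rfl⟩ : a = 3 * t + 2 ∧ b = -t - 1 := by omega
      have : (n : ℤ) = 2 * (25 * t ^ 2 + 40 * t + 15) + 1 := by linear_combination -h
      omega

namespace PowerSeries

variable {R : Type*} [CommRing R]

instance {p : ℕ} [CharP R p] : CharP R⟦X⟧ p := charP_of_injective_ringHom C_injective p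

theorem smodEq_X_pow_iff {k : ℕ} {f g : R⟦X⟧} :
    f ≡ g [SMOD Ideal.span {X ^ k}] ↔ ∀ m < k, coeff m f = coeff m g := by
  simp [SModEq.sub_mem, Ideal.mem_span_singleton, X_pow_dvd_iff, sub_eq_zero]

theorem _root_.SModEq.X_pow_mono {k l : ℕ} {f g : R⟦X⟧} (hkl : k ≤ l)
    (h : f ≡ g [SMOD Ideal.span {X ^ l}]) : f ≡ g [SMOD Ideal.span {X ^ k}] :=
  h.mono (Ideal.span_singleton_le_span_singleton.2 (pow_dvd_pow X hkl))

theorem X_pow_smodEq_zero {k e : ℕ} (h : k ≤ e) :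
    (X : R⟦X⟧) ^ e ≡ 0 [SMOD Ideal.span {X ^ k}] :=
  SModEq.zero.2 (Ideal.mem_span_singleton.2 (pow_dvd_pow X h))

theorem one_add_X_pow_smodEq_one {k e : ℕ} (h : k ≤ e) :
    1 + (X : R⟦X⟧) ^ e ≡ 1 [SMOD Ideal.span {X ^ k}] := by
  simpa using SModEq.rfl.add (X_pow_smodEq_zero (R := R) h)

theorem one_sub_X_pow_smodEq_one {k e : ℕ} (h : k ≤ e) :
    1 - (X : R⟦X⟧) ^ e ≡ 1 [SMOD Ideal.span {X ^ k}] := by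
  simpa using SModEq.rfl.sub (X_pow_smodEq_zero (R := R) h)

theorem X_pow_mul_smodEq {k e : ℕ} {f : R⟦X⟧} (h : f ≡ 1 [SMOD Ideal.span {X ^ k}]) :
    X ^ e * f ≡ X ^ e [SMOD Ideal.span {X ^ (e + k)}] := by
  rw [SModEq.sub_mem, Ideal.mem_span_singleton, ← mul_sub_one, pow_add]
  exact mul_dvd_mul_left _ (Ideal.mem_span_singleton.1 (SModEq.sub_mem.1 h))

theorem isUnit_one_add_X_pow {e : ℕ} (he : e ≠ 0) : IsUnit (1 + (X : R⟦X⟧) ^ e) := by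
  simp [isUnit_iff_constantCoeff, he]

theorem isUnit_one_sub_X_pow {e : ℕ} (he : e ≠ 0) : IsUnit (1 - (X : R⟦X⟧) ^ e) := by
  simp [isUnit_iff_constantCoeff, he]

theorem isUnit_one_sub_X_pow_pow {b : ℕ} (hb : b ≠ 0) (i : ℕ) :
    IsUnit (1 - ((X : R⟦X⟧) ^ b) ^ (i + 1)) := by
  rw [← pow_mul]
  exact isUnit_one_sub_X_pow (by positivity)

theorem qPoch_X_pow_smodEq (b : ℕ) {l m : ℕ} (h : l ≤ m) :
    qPoch ((X : R⟦X⟧) ^ b) m ≡ qPoch (X ^ b) l [SMOD Ideal.span {X ^ (b * (l + 1))}] :=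
  prod_range_smodEq_of_le h fun i hi ↦ by
    rw [← pow_mul]
    exact one_sub_X_pow_smodEq_one (Nat.mul_le_mul_left b (by have := (mem_Ico.1 hi).1; omega))

theorem qChoose_X_pow_mul_qPoch_smodEq_one {b n k l m : ℕ} (hb : b ≠ 0) (hkn : k ≤ n)
    (hlk : l ≤ k) (hl : l ≤ n - k) (hlm : l ≤ m) :
    qChoose ((X : R⟦X⟧) ^ b) n k * qPoch (X ^ b) m ≡ 1
      [SMOD Ideal.span {X ^ (b * (l + 1))}] := by
  have hF : qPoch (X ^ b) l * (qChoose ((X : R⟦X⟧) ^ b) n k * qPoch (X ^ b) l) ≡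
      qPoch (X ^ b) l * 1 [SMOD Ideal.span {X ^ (b * (l + 1))}] := by
    have h₁ := qPoch_X_pow_smodEq (R := R) b hlk
    have h₂ := qPoch_X_pow_smodEq (R := R) b hl
    have h₃ := qPoch_X_pow_smodEq (R := R) b (hlk.trans hkn)
    rw [← qChoose_mul_qPoch_mul_qPoch _ hkn] at h₃
    rw [mul_one, mul_comm (qPoch _ l)]
    exact ((SModEq.refl (qChoose ((X : R⟦X⟧) ^ b) n k)).mul h₁ |>.mul h₂).symm.trans h₃
  have hG := SModEq.of_isUnit_mul (isUnit_qPoch _ (isUnit_one_sub_X_pow_pow hb) l) hF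
  exact ((SModEq.refl (qChoose ((X : R⟦X⟧) ^ b) n k)).mul (qPoch_X_pow_smodEq b hlm)).trans hG

/-- The finite Jacobi triple product
`∏_{i<N} (1 + z q^{2i+1}) (1 + z⁻¹ q^{2i+1}) = ∑_{|j| ≤ N} [2N, N+j]_{q²} z^j q^{j²}`
at `q = X^a`, `z = X^r`. -/
theorem finite_jacobi_triple_product {a r : ℕ} (ha : a ≠ 0) (hr : r ≤ a) (N : ℕ) :
    ∑ k ∈ range (2 * N + 1),
        qChoose ((X : R⟦X⟧) ^ (2 * a)) (2 * N) k * X ^ thetaExp a r (k - N) =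
      ∏ i ∈ range N, (1 + X ^ (a * (2 * i + 1) + r)) * (1 + X ^ (a * (2 * i + 1) - r)) := by
  induction N with
  | zero => simp [thetaExp]
  | succ N ih =>
    rw [show 2 * (N + 1) + 1 = 2 * N + 3 by ring, show 2 * (N + 1) = 2 * N + 2 by ring,
      sum_range_qChoose_add_two_mul _ (isUnit_one_sub_X_pow_pow (by positivity)),
      prod_range_succ, ← ih, sum_mul]
    refine sum_congr rfl fun k hk ↦ ?_
    have hk : k ≤ 2 * N := Nat.lt_succ_iff.1 (mem_range.1 hk)
    set j : ℤ := k - N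
    have hv : r ≤ a * (2 * N + 1) := hr.trans (Nat.le_mul_of_pos_right a (by omega))
    have E₁ : ((X : R⟦X⟧) ^ (2 * a)) ^ k * X ^ thetaExp a r (k - (N + 1 : ℕ)) =
        X ^ thetaExp a r j * X ^ (a * (2 * N + 1) - r) := by
      rw [← pow_mul, ← pow_add, ← pow_add]
      congr 1
      zify [hv]
      rw [natCast_thetaExp hr, natCast_thetaExp hr]
      ring
    have E₂ : ((X : R⟦X⟧) ^ (2 * a)) ^ (2 * N - k) *
          X ^ thetaExp a r ((k + 2 : ℕ) - (N + 1 : ℕ)) =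
        X ^ thetaExp a r j * X ^ (a * (2 * N + 1) + r) := by
      rw [← pow_mul, ← pow_add, ← pow_add]
      congr 1
      zify [hk]
      rw [natCast_thetaExp hr, natCast_thetaExp hr]
      ring
    have E₃ : ((X : R⟦X⟧) ^ (2 * a)) ^ (2 * N + 1) =
        X ^ (a * (2 * N + 1) + r) * X ^ (a * (2 * N + 1) - r) := by
      rw [← pow_mul, ← pow_add]
      congr 1
      zify [hv]
      ring
    rw [show ((k + 1 : ℕ) : ℤ) - (N + 1 : ℕ) = j by push_cast; ring, mul_assoc]
    congr 1
    linear_combination E₁ + E₂ + X ^ thetaExp a r j * E₃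

noncomputable def partialTheta (a r N : ℕ) : R⟦X⟧ := ∑ j ∈ Icc (-(N : ℤ)) N, X ^ thetaExp a r j

theorem partialTheta_eq_sum_range (a r N : ℕ) :
    (partialTheta a r N : R⟦X⟧) = ∑ k ∈ range (2 * N + 1), X ^ thetaExp a r (k - N) := by
  refine (sum_nbij' (fun k : ℕ ↦ (k : ℤ) - N) (fun j ↦ (j + N).toNat) ?_ ?_ ?_ ?_
    fun _ _ ↦ rfl).symm
  all_goals intro x hx; simp only [mem_range, mem_Icc] at hx ⊢; omega

theorem partialTheta_smodEq {a r : ℕ} (h : r < a) (N : ℕ) :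
    (partialTheta a r N : R⟦X⟧) ≡ qPoch (X ^ (2 * a)) N *
      ∏ i ∈ range N, (1 + X ^ (a * (2 * i + 1) + r)) * (1 + X ^ (a * (2 * i + 1) - r))
      [SMOD Ideal.span {X ^ (N + 1)}] := by
  rw [← finite_jacobi_triple_product (by omega) h.le, mul_sum, partialTheta_eq_sum_range]
  refine SModEq.sum fun k hk ↦ ?_
  have hk : k ≤ 2 * N := Nat.lt_succ_iff.1 (mem_range.1 hk)
  have hG := qChoose_X_pow_mul_qPoch_smodEq_one (R := R) (l := min k (2 * N - k)) (m := N)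
    (by omega : 2 * a ≠ 0) hk (min_le_left _ _) (min_le_right _ _) (by omega)
  have he := natAbs_le_thetaExp h (k - N)
  have ha : 2 * (min k (2 * N - k) + 1) ≤ 2 * a * (min k (2 * N - k) + 1) :=
    Nat.mul_le_mul_right _ (by omega)
  convert ((X_pow_mul_smodEq (e := thetaExp a r (k - N)) hG).X_pow_mono
    (k := N + 1) (by omega)).symm using 1
  ring

theorem coeff_partialTheta_mul_partialTheta (a r a' r' N n : ℕ) :
    coeff n (partialTheta a r N * partialTheta a' r' N : R⟦X⟧) =
      #{p ∈ Icc (-N : ℤ) N ×ˢ Icc (-N : ℤ) N | thetaExp a r p.1 + thetaExp a' r' p.2 = n} := by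
  simp [partialTheta, sum_mul_sum, ← sum_product', ← pow_add, coeff_X_pow, sum_boole, eq_comm]

theorem prod_one_add_X_pow_mul_prod_one_sub_X_pow_two_mul (d N : ℕ) :
    (∏ k ∈ range (2 * N), (1 + (X : R⟦X⟧) ^ (d * (k + 1)))) *
        ∏ k ∈ range N, (1 - X ^ (d * (2 * k + 1))) =
      (∏ k ∈ range N, (1 + X ^ (2 * d * (k + 1)))) *
        ∏ k ∈ range N, (1 - X ^ (2 * d * (2 * k + 1))) := by
  induction N with
  | zero => simp
  | succ N ih =>
    rw [show 2 * (N + 1) = 2 * N + 1 + 1 by ring]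
    simp only [prod_range_succ]
    linear_combination (1 + X ^ (d * (2 * N + 1))) * (1 + X ^ (d * (2 * N + 1 + 1))) *
      (1 - X ^ (d * (2 * N + 1))) * ih

/-- Euler's `∏ (1 + q^k) · ∏_{m odd} (1 - q^m) = 1` at `q = X^d`, truncated. Since
`(1 + x)(1 - x) = 1 - x²`, the truncation at `X^{d(N+1)}` does not change when `d` is doubled,
and for `d` large it is trivially `1`. -/
theorem euler_smodEq_one (d N : ℕ) :
    (∏ k ∈ range N, (1 + (X : R⟦X⟧) ^ (d * (k + 1)))) *
        ∏ k ∈ range N, (1 - X ^ (d * (2 * k + 1))) ≡ 1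
      [SMOD Ideal.span {X ^ (d * (N + 1))}] := by
  set E : ℕ → R⟦X⟧ := fun D ↦
    (∏ k ∈ range N, (1 + X ^ (D * (k + 1)))) * ∏ k ∈ range N, (1 - X ^ (D * (2 * k + 1)))
    with hE
  have step (D : ℕ) : E D ≡ E (2 * D) [SMOD Ideal.span {X ^ (D * (N + 1))}] := by
    simp only [hE, ← prod_one_add_X_pow_mul_prod_one_sub_X_pow_two_mul]
    refine (prod_range_smodEq_of_le (by omega) fun k hk ↦ ?_).symm.mul (SModEq.refl _)
    exact one_add_X_pow_smodEq_one (Nat.mul_le_mul_left D (by have := (mem_Ico.1 hk).1; omega))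
  have iterate (i : ℕ) : E d ≡ E (2 ^ i * d) [SMOD Ideal.span {X ^ (d * (N + 1))}] := by
    induction i with
    | zero => simp
    | succ i ih =>
      rw [pow_succ, mul_comm _ 2, mul_assoc]
      exact ih.trans ((step _).X_pow_mono
        (Nat.mul_le_mul_right _ (Nat.le_mul_of_pos_left d (Nat.two_pow_pos i))))
  have base (D : ℕ) : E D ≡ 1 [SMOD Ideal.span {X ^ D}] := by
    have h₁ : ∏ k ∈ range N, (1 + (X : R⟦X⟧) ^ (D * (k + 1))) ≡ ∏ k ∈ range N, 1
        [SMOD Ideal.span {X ^ D}] :=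
      SModEq.prod fun k _ ↦ one_add_X_pow_smodEq_one (Nat.le_mul_of_pos_right D (by omega))
    have h₂ : ∏ k ∈ range N, (1 - (X : R⟦X⟧) ^ (D * (2 * k + 1))) ≡ ∏ k ∈ range N, 1
        [SMOD Ideal.span {X ^ D}] :=
      SModEq.prod fun k _ ↦ one_sub_X_pow_smodEq_one (Nat.le_mul_of_pos_right D (by omega))
    simpa using h₁.mul h₂
  refine (iterate N).trans ((base _).X_pow_mono ?_)
  rw [mul_comm]
  exact Nat.mul_le_mul_right d Nat.lt_two_pow_self

theorem prod_one_add_X_pow_odd_five_mul (N : ℕ) :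
    (∏ i ∈ range N, (1 + (X : R⟦X⟧) ^ (5 * (2 * i + 1) + 4)) * (1 + X ^ (5 * (2 * i + 1) - 4))) *
        (∏ i ∈ range N, (1 + X ^ (5 * (2 * i + 1) + 2)) * (1 + X ^ (5 * (2 * i + 1) - 2))) *
        ∏ i ∈ range N, (1 + X ^ (5 * (2 * i + 1))) =
      ∏ u ∈ range (5 * N), (1 + X ^ (2 * u + 1)) := by
  induction N with
  | zero => simp
  | succ N ih =>
    rw [show 5 * (N + 1) = 5 * N + 5 by ring, prod_range_add _ (5 * N) 5, ← ih]
    simp only [prod_range_succ, prod_range_zero, one_mul]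
    rw [show 5 * (2 * N + 1) + 4 = 2 * (5 * N + 4) + 1 by ring,
      show 5 * (2 * N + 1) - 4 = 2 * (5 * N + 0) + 1 by omega,
      show 5 * (2 * N + 1) + 2 = 2 * (5 * N + 3) + 1 by ring,
      show 5 * (2 * N + 1) - 2 = 2 * (5 * N + 1) + 1 by omega,
      show 5 * (2 * N + 1) = 2 * (5 * N + 2) + 1 by ring]
    ring

section CharTwo

variable [CharP R 2]

theorem qPoch_X_pow_eq_prod_one_add (b N : ℕ) :
    qPoch ((X : R⟦X⟧) ^ b) N = ∏ k ∈ range N, (1 + X ^ (b * (k + 1))) := by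
  simp only [qPoch, CharTwo.sub_eq_add, ← pow_mul]

theorem prod_one_add_mul_partialTheta_mul_partialTheta_smodEq (N : ℕ) :
    (∏ k ∈ range N, (1 + (X : R⟦X⟧) ^ (k + 1))) * (∏ k ∈ range N, (1 + X ^ (5 * (2 * k + 1)))) *
        (partialTheta 5 4 N * partialTheta 5 2 N) ≡
      ∏ k ∈ range N, (1 + X ^ (20 * (k + 1))) [SMOD Ideal.span {X ^ (N + 1)}] := by
  have h₄ := partialTheta_smodEq (R := R) (by norm_num : 4 < 5) N
  have h₂ := partialTheta_smodEq (R := R) (by norm_num : 2 < 5) N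
  have hodd : ∏ u ∈ range (5 * N), (1 + (X : R⟦X⟧) ^ (2 * u + 1)) ≡
      ∏ k ∈ range N, (1 + X ^ (2 * k + 1)) [SMOD Ideal.span {X ^ (N + 1)}] :=
    prod_range_smodEq_of_le (by omega) fun u hu ↦
      one_add_X_pow_smodEq_one (by have := (mem_Ico.1 hu).1; omega)
  rw [← prod_one_add_X_pow_odd_five_mul] at hodd
  have heuler := euler_smodEq_one (R := R) 1 N
  simp only [CharTwo.sub_eq_add, one_mul] at heuler
  have hsq : qPoch ((X : R⟦X⟧) ^ (2 * 5)) N * qPoch (X ^ (2 * 5)) N =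
      ∏ k ∈ range N, (1 + X ^ (20 * (k + 1))) := by
    rw [qPoch_X_pow_eq_prod_one_add, ← prod_mul_distrib]
    refine prod_congr rfl fun k _ ↦ ?_
    rw [← sq, CharTwo.add_sq, one_pow, ← pow_mul]
    ring_nf
  set P₁ := ∏ k ∈ range N, (1 + (X : R⟦X⟧) ^ (k + 1))
  set O₁ := ∏ k ∈ range N, (1 + (X : R⟦X⟧) ^ (2 * k + 1))
  set O₅ := ∏ k ∈ range N, (1 + (X : R⟦X⟧) ^ (5 * (2 * k + 1)))
  set T₄ := ∏ i ∈ range N,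
    (1 + (X : R⟦X⟧) ^ (5 * (2 * i + 1) + 4)) * (1 + X ^ (5 * (2 * i + 1) - 4))
  set T₂ := ∏ i ∈ range N,
    (1 + (X : R⟦X⟧) ^ (5 * (2 * i + 1) + 2)) * (1 + X ^ (5 * (2 * i + 1) - 2))
  set Q := qPoch ((X : R⟦X⟧) ^ (2 * 5)) N
  calc P₁ * O₅ * (partialTheta 5 4 N * partialTheta 5 2 N)
      ≡ P₁ * O₅ * (Q * T₄ * (Q * T₂)) [SMOD Ideal.span {X ^ (N + 1)}] :=
        (SModEq.refl (P₁ * O₅)).mul (h₄.mul h₂)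
    _ = Q * Q * (P₁ * (T₄ * T₂ * O₅)) := by ring
    _ ≡ Q * Q * (P₁ * O₁) [SMOD Ideal.span {X ^ (N + 1)}] :=
        (SModEq.refl (Q * Q)).mul ((SModEq.refl P₁).mul hodd)
    _ ≡ Q * Q * 1 [SMOD Ideal.span {X ^ (N + 1)}] := (SModEq.refl (Q * Q)).mul heuler
    _ = ∏ k ∈ range N, (1 + X ^ (20 * (k + 1))) := by rw [mul_one, hsq]

theorem smodEq_partialTheta_mul_partialTheta {C : R⟦X⟧} {N : ℕ}
    (h : (∏ k ∈ Icc 1 N, (1 - (X : R⟦X⟧) ^ k)) * C ≡ ∏ k ∈ Icc 1 N, (1 - X ^ (5 * k)) ^ 5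
      [SMOD Ideal.span {X ^ (N + 1)}]) :
    C ≡ partialTheta 5 4 N * partialTheta 5 2 N [SMOD Ideal.span {X ^ (N + 1)}] := by
  have h₅ (k : ℕ) : (1 + (X : R⟦X⟧) ^ (5 * (k + 1))) ^ 5 =
      (1 + X ^ (5 * (k + 1))) * (1 + X ^ (20 * (k + 1))) := by
    rw [show 5 = 1 + 2 ^ 2 by rfl, pow_add, pow_one, add_pow_char_pow, one_pow, ← pow_mul]
    ring_nf
  simp only [prod_Icc_one_eq_prod_range, CharTwo.sub_eq_add, h₅, prod_mul_distrib] at h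
  have heuler := (euler_smodEq_one (R := R) 5 N).X_pow_mono (k := N + 1) (by omega)
  simp only [CharTwo.sub_eq_add] at heuler
  set P₁ := ∏ k ∈ range N, (1 + (X : R⟦X⟧) ^ (k + 1))
  set P₅ := ∏ k ∈ range N, (1 + (X : R⟦X⟧) ^ (5 * (k + 1)))
  set P₂₀ := ∏ k ∈ range N, (1 + (X : R⟦X⟧) ^ (20 * (k + 1)))
  set O₅ := ∏ k ∈ range N, (1 + (X : R⟦X⟧) ^ (5 * (2 * k + 1)))
  have hC : P₁ * O₅ * C ≡ P₂₀ [SMOD Ideal.span {X ^ (N + 1)}] :=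
    calc P₁ * O₅ * C = O₅ * (P₁ * C) := by ring
      _ ≡ O₅ * (P₅ * P₂₀) [SMOD Ideal.span {X ^ (N + 1)}] := (SModEq.refl O₅).mul h
      _ = P₂₀ * (P₅ * O₅) := by ring
      _ ≡ P₂₀ * 1 [SMOD Ideal.span {X ^ (N + 1)}] := (SModEq.refl P₂₀).mul heuler
      _ = P₂₀ := mul_one _
  have hunit : IsUnit (P₁ * O₅) :=
    (IsUnit.prod_iff.2 fun k _ ↦ isUnit_one_add_X_pow (by omega)).mul
      (IsUnit.prod_iff.2 fun k _ ↦ isUnit_one_add_X_pow (by omega))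
  exact SModEq.of_isUnit_mul hunit
    (hC.trans (prod_one_add_mul_partialTheta_mul_partialTheta_smodEq N).symm)

end CharTwo

end PowerSeries

/-- Garvan's congruence for 5-cores: `c₅(n)` is even when `n ≡ 2, 6 (mod 10)`. -/
theorem five_core_even (c : ℕ → ℤ)
    (hc : ∀ n N : ℕ, n ≤ N →
      (PowerSeries.coeff (R := ℤ) n)
          ((∏ k ∈ Finset.Icc 1 N, (1 - PowerSeries.X ^ k)) * PowerSeries.mk (fun j => c j)) =
        (PowerSeries.coeff (R := ℤ) n)
          (∏ k ∈ Finset.Icc 1 N, (1 - PowerSeries.X ^ (5 * k)) ^ 5)) :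
    ∀ n : ℕ, (n % 10 = 2 ∨ n % 10 = 6) → 2 ∣ c n := by
  intro n hn
  have hmk : PowerSeries.map (Int.castRingHom (ZMod 2)) (PowerSeries.mk fun j ↦ c j) =
      PowerSeries.mk fun j ↦ (c j : ZMod 2) := by
    ext; simp
  have hmod : (∏ k ∈ Icc 1 n, (1 - X ^ k)) * PowerSeries.mk (fun j ↦ (c j : ZMod 2)) ≡
      ∏ k ∈ Icc 1 n, (1 - X ^ (5 * k)) ^ 5 [SMOD Ideal.span {X ^ (n + 1)}] := by
    refine smodEq_X_pow_iff.2 fun m hm ↦ ?_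
    have h := congrArg (Int.castRingHom (ZMod 2)) (hc m n (by omega))
    rw [← coeff_map, ← coeff_map] at h
    simpa [map_prod, hmk] using h
  have key := smodEq_X_pow_iff.1 (smodEq_partialTheta_mul_partialTheta hmod) n n.lt_succ_self
  rw [coeff_mk, coeff_partialTheta_mul_partialTheta,
    (ZMod.natCast_eq_zero_iff_even).2 (even_card_filter_thetaExp hn)] at key
  exact (ZMod.intCast_zmod_eq_zero_iff_dvd _ 2).1 key
end

section
/- Define a(n) by ∑_{n≥1} a(n) qⁿ = q·∏_{k≥1} (1−q^k)³(1−q^{7k})³ (the Fourier expansion of η(τ)³η(7τ)³ with q = e^{2πiτ}). Then a(n) = 0 whenever n ≡ 3, 5, or 6 (mod 7). -/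
/-!
By Jacobi's identity `∏ (1 - q^k)^3 = ∑_j (-1)^j (2j + 1) q^(j(j+1)/2)`, the cube of the Euler
product is supported on triangular numbers, which are `≡ 0, 1, 3, 6 (mod 7)`. Since
`∏ (1 - q^(7k))^3` is a series in `q^7`, the coefficient of `q^n` in the eta product vanishes
when `n - 1 ≡ 2, 4, 5 (mod 7)`.

Only a truncated Jacobi identity is needed. Substituting `z ↦ q^N z` turns the finite triple
product `(1 - z) ∏_{i=1}^N (q^i - z)(1 - q^i z)` into `q^(N(N+1)/2) ∏_{i=0}^{2N} (1 - q^i z)`,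
whose coefficients are Gaussian binomials by the `q`-binomial theorem, and differentiating at
`z = 1`, where `1 - z` vanishes, expresses `(q;q)_N^2` through them. Modulo `q^(m+1)` every
Gaussian binomial `[j+k, j]` with `j, k ≥ m` is the inverse of `(q;q)_m`, so up to degree `m`
the series `(q;q)_N^3` is a signed sum of powers of `q` with triangular exponents.
-/

open PowerSeries Finset

noncomputable section

def triangular (k : ℤ) : ℕ := (k * (k + 1) / 2).toNat

theorem two_mul_natCast_triangular (k : ℤ) : 2 * (triangular k : ℤ) = k * (k + 1) := by
  have heven : 2 ∣ k * (k + 1) := (Int.even_mul_succ_self k).two_dvd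
  have hnonneg : 0 ≤ k * (k + 1) := by rcases le_or_gt 0 k with h | h <;> nlinarith
  rw [triangular, Int.toNat_of_nonneg (Int.ediv_nonneg hnonneg zero_le_two),
    Int.mul_ediv_cancel' heven]

theorem triangular_neg_sub_one (k : ℤ) : triangular (-k - 1) = triangular k := by
  simp only [triangular]
  ring_nf

theorem le_triangular (k : ℤ) : k ≤ triangular k := by
  have h := two_mul_natCast_triangular k
  rcases le_or_gt k 0 with hk | hk <;> nlinarith

theorem triangular_mod_seven (k : ℤ) :
    triangular k % 7 = 0 ∨ triangular k % 7 = 1 ∨ triangular k % 7 = 3 ∨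
      triangular k % 7 = 6 := by
  have h : (2 * triangular k : ZMod 7) = k * (k + 1) := by
    exact_mod_cast congrArg (Int.cast : ℤ → ZMod 7) (two_mul_natCast_triangular k)
  have key : ∀ x y : ZMod 7, 2 * y = x * (x + 1) →
      y.val = 0 ∨ y.val = 1 ∨ y.val = 3 ∨ y.val = 6 := by
    decide
  simpa [ZMod.val_natCast] using key _ _ h

theorem choose_two_add_choose_two_eq_mul_add_triangular (N t : ℕ) :
    (N + 1).choose 2 + t.choose 2 = N * t + triangular (t - N - 1) := by
  have h : 2 * (triangular (t - N - 1) : ℚ) = (t - N - 1) * (t - N - 1 + 1) := by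
    exact_mod_cast two_mul_natCast_triangular (t - N - 1)
  qify
  rw [Nat.cast_choose_two, Nat.cast_choose_two]
  push_cast
  linarith

namespace PowerSeries

variable {R : Type*} [CommRing R]

def qPochhammer (n : ℕ) : R⟦X⟧ := ∏ i ∈ range n, (1 - X ^ (i + 1))

theorem qPochhammer_succ (n : ℕ) :
    (qPochhammer (n + 1) : R⟦X⟧) = qPochhammer n * (1 - X ^ (n + 1)) :=
  prod_range_succ _ n

theorem qPochhammer_eq_prod_Icc (n : ℕ) :
    (qPochhammer n : R⟦X⟧) = ∏ k ∈ Icc 1 n, (1 - X ^ k) := by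
  rw [qPochhammer, range_eq_Ico, prod_Ico_add' (fun k => (1 - X ^ k : R⟦X⟧)), zero_add,
    Ico_add_one_right_eq_Icc]

theorem isUnit_qPochhammer (n : ℕ) : IsUnit (qPochhammer n : R⟦X⟧) := by
  simp [isUnit_iff_constantCoeff, qPochhammer]

def qBinomial : ℕ → ℕ → R⟦X⟧
  | _, 0 => 1
  | 0, _ + 1 => 0
  | n + 1, j + 1 => qBinomial n (j + 1) + X ^ (n - j) * qBinomial n j

@[simp]
theorem qBinomial_zero_right (n : ℕ) : (qBinomial n 0 : R⟦X⟧) = 1 := by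
  cases n <;> rfl

theorem qBinomial_succ_succ (n j : ℕ) :
    (qBinomial (n + 1) (j + 1) : R⟦X⟧) = qBinomial n (j + 1) + X ^ (n - j) * qBinomial n j :=
  rfl

theorem qBinomial_of_lt {n j : ℕ} (h : n < j) : (qBinomial n j : R⟦X⟧) = 0 := by
  induction n generalizing j with
  | zero => obtain ⟨j, rfl⟩ := Nat.exists_eq_add_one_of_ne_zero h.ne'; rfl
  | succ n ih =>
    obtain ⟨j, rfl⟩ := Nat.exists_eq_add_one_of_ne_zero (Nat.ne_zero_of_lt h)
    rw [qBinomial_succ_succ, ih (by omega), ih (by omega), mul_zero, add_zero]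

theorem qBinomial_self (n : ℕ) : (qBinomial n n : R⟦X⟧) = 1 := by
  induction n with
  | zero => rfl
  | succ n ih =>
    rw [qBinomial_succ_succ, qBinomial_of_lt n.lt_succ_self, ih, Nat.sub_self, pow_zero,
      one_mul, zero_add]

theorem qPochhammer_mul_qPochhammer_mul_qBinomial (j k : ℕ) :
    (qPochhammer j * qPochhammer k * qBinomial (j + k) j : R⟦X⟧) = qPochhammer (j + k) := by
  induction j generalizing k with
  | zero => simp [qPochhammer]
  | succ j ihj =>
    induction k with
    | zero => simp [qPochhammer, qBinomial_self]
    | succ k ihk =>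
      have hj := ihj (k + 1)
      rw [← add_assoc, add_right_comm] at hj
      rw [← add_assoc, qBinomial_succ_succ, show j + 1 + k - j = k + 1 by omega]
      simp only [qPochhammer_succ] at hj ihk ⊢
      linear_combination (1 - X ^ (k + 1)) * ihk + X ^ (k + 1) * (1 - X ^ (j + 1)) * hj

local notation "Y" => Polynomial.X

theorem coeff_prod_one_sub_C_X_pow_mul_X (n k : ℕ) :
    (∏ i ∈ range n, (1 - Polynomial.C (X ^ i) * Y : Polynomial R⟦X⟧)).coeff k =
      (-1) ^ k * X ^ k.choose 2 * qBinomial n k := by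
  induction n generalizing k with
  | zero => cases k <;> simp [qBinomial, Polynomial.coeff_one]
  | succ n ih =>
    rw [prod_range_succ, mul_sub, mul_one, ← mul_assoc, mul_comm _ (Polynomial.C _),
      Polynomial.coeff_sub]
    cases k with
    | zero => simp only [Polynomial.coeff_mul_X_zero, ih]; simp
    | succ k =>
      rw [Polynomial.coeff_mul_X, Polynomial.coeff_C_mul, ih, ih, qBinomial_succ_succ]
      rcases le_or_gt k n with hkn | hnk
      · obtain ⟨d, rfl⟩ := Nat.exists_eq_add_of_le hkn
        rw [Nat.add_sub_cancel_left, Nat.choose_succ_succ', Nat.choose_one_right]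
        ring
      · rw [qBinomial_of_lt hnk, qBinomial_of_lt (hnk.trans k.lt_succ_self)]
        ring

def finiteTripleProd (N : ℕ) : Polynomial R⟦X⟧ :=
  (1 - Y) *
    ∏ i ∈ range N, (Polynomial.C (X ^ (i + 1)) - Y) * (1 - Polynomial.C (X ^ (i + 1)) * Y)

theorem finiteTripleProd_comp (N : ℕ) :
    (finiteTripleProd N : Polynomial R⟦X⟧).comp (Polynomial.C (X ^ N) * Y) =
      Polynomial.C (X ^ (N + 1).choose 2) *
        ∏ i ∈ range (2 * N + 1), (1 - Polynomial.C (X ^ i) * Y) := by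
  have hsum : (N + 1).choose 2 = ∑ i ∈ range N, (i + 1) := by
    rw [Nat.choose_two_right, ← sum_range_id, sum_range_succ', add_zero]
  have hleft : ∏ i ∈ range N, (Polynomial.C (X ^ (i + 1)) - Polynomial.C (X ^ N) * Y) =
      Polynomial.C (X ^ (N + 1).choose 2) *
        ∏ i ∈ range N, (1 - Polynomial.C (X ^ i : R⟦X⟧) * Y) := by
    rw [← prod_range_reflect (fun i => 1 - Polynomial.C (X ^ i : R⟦X⟧) * Y), hsum,
      ← prod_pow_eq_pow_sum, map_prod, ← prod_mul_distrib]
    refine prod_congr rfl fun i hi => ?_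
    have hN : (X ^ N : R⟦X⟧) = X ^ (i + 1) * X ^ (N - 1 - i) := by
      rw [← pow_add]; congr 1; have := mem_range.1 hi; omega
    rw [hN, map_mul]
    ring
  have hright : ∏ i ∈ range (2 * N + 1), (1 - Polynomial.C (X ^ i : R⟦X⟧) * Y) =
      (∏ i ∈ range N, (1 - Polynomial.C (X ^ i) * Y)) *
        ((∏ i ∈ range N, (1 - Polynomial.C (X ^ (N + (i + 1))) * Y)) *
          (1 - Polynomial.C (X ^ (N + 0)) * Y)) := by
    rw [two_mul, add_assoc, prod_range_add, prod_range_succ']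
  have hshift : ∏ i ∈ range N, (1 - Polynomial.C (X ^ (i + 1)) * (Polynomial.C (X ^ N) * Y)) =
      ∏ i ∈ range N, (1 - Polynomial.C (X ^ (N + (i + 1)) : R⟦X⟧) * Y) :=
    prod_congr rfl fun i _ => by rw [← mul_assoc, ← map_mul, ← pow_add, add_comm (i + 1)]
  simp only [finiteTripleProd, Polynomial.mul_comp, Polynomial.sub_comp, Polynomial.one_comp,
    Polynomial.X_comp, Polynomial.C_comp, Polynomial.prod_comp, prod_mul_distrib, hleft, hright,
    hshift, add_zero]
  ring

theorem coeff_finiteTripleProd (N t : ℕ) :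
    (finiteTripleProd N : Polynomial R⟦X⟧).coeff t =
      (-1) ^ t * X ^ triangular (t - N - 1) * qBinomial (2 * N + 1) t := by
  rw [← X_pow_mul_inj (k := N * t)]
  calc X ^ (N * t) * (finiteTripleProd N).coeff t
      = ((finiteTripleProd N).comp (Polynomial.C (X ^ N) * Y)).coeff t := by
        rw [Polynomial.comp_C_mul_X_coeff, ← pow_mul, mul_comm]
    _ = X ^ ((N + 1).choose 2 + t.choose 2) * ((-1) ^ t * qBinomial (2 * N + 1) t : R⟦X⟧) := by
        rw [finiteTripleProd_comp, Polynomial.coeff_C_mul, coeff_prod_one_sub_C_X_pow_mul_X]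
        ring
    _ = _ := by
        rw [choose_two_add_choose_two_eq_mul_add_triangular]
        ring

theorem natDegree_finiteTripleProd_lt (N : ℕ) :
    (finiteTripleProd N : Polynomial R⟦X⟧).natDegree < 2 * N + 2 :=
  Nat.lt_succ_of_le <| Polynomial.natDegree_le_iff_coeff_eq_zero.2 fun t ht => by
    rw [coeff_finiteTripleProd, qBinomial_of_lt ht, mul_zero]

theorem neg_one_pow_mul_qPochhammer_sq (N : ℕ) :
    (-1) ^ (N + 1) * (qPochhammer N : R⟦X⟧) ^ 2 = ∑ t ∈ range (2 * N + 2),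
      ((-1) ^ t * t : ℤ) • (X ^ triangular (t - N - 1) * qBinomial (2 * N + 1) t) := by
  calc (-1) ^ (N + 1) * (qPochhammer N : R⟦X⟧) ^ 2
      = (Polynomial.derivative (finiteTripleProd N)).eval 1 := by
        simp only [finiteTripleProd, Polynomial.derivative_mul, Polynomial.eval_add,
          Polynomial.eval_mul, Polynomial.eval_sub, Polynomial.eval_one, Polynomial.eval_X,
          sub_self, zero_mul, add_zero, Polynomial.derivative_sub, Polynomial.derivative_one,
          Polynomial.derivative_X, Polynomial.eval_prod, Polynomial.eval_C, mul_one,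
          Polynomial.eval_zero, qPochhammer]
        rw [prod_congr rfl fun i _ => show (X ^ (i + 1) - 1) * (1 - X ^ (i + 1) : R⟦X⟧) =
          -1 * (1 - X ^ (i + 1)) ^ 2 by ring, prod_mul_distrib, prod_const, card_range, prod_pow]
        ring
    _ = ∑ t ∈ range (2 * N + 2), (finiteTripleProd N).coeff t * (t : R⟦X⟧) := by
        rw [Polynomial.derivative_eval, Polynomial.sum_over_range' _ (by simp) _
          (natDegree_finiteTripleProd_lt N)]
        simp
    _ = _ := sum_congr rfl fun t _ => by
        rw [coeff_finiteTripleProd, zsmul_eq_mul]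
        push_cast
        ring

local notation:max "π" m:max => Ideal.Quotient.mk (Ideal.span {(X : PowerSeries _) ^ (m + 1)})

theorem mk_X_pow_eq_zero {m e : ℕ} (h : m < e) : (π m) (X ^ e : R⟦X⟧) = 0 :=
  Ideal.Quotient.eq_zero_iff_mem.2 <| Ideal.mem_span_singleton.2 <| pow_dvd_pow X h

theorem coeff_eq_of_mk_eq {m : ℕ} {f g : R⟦X⟧} (h : (π m) f = (π m) g) :
    coeff m f = coeff m g := by
  rw [Ideal.Quotient.eq, Ideal.mem_span_singleton, X_pow_dvd_iff] at h
  simpa [sub_eq_zero] using h m m.lt_succ_self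

theorem mk_qPochhammer_of_le {m n : ℕ} (h : m ≤ n) :
    (π m) (qPochhammer n : R⟦X⟧) = (π m) (qPochhammer m) := by
  have hfactor : ∀ i ∈ Ico m n, (π m) (1 - X ^ (i + 1) : R⟦X⟧) = 1 := fun i hi => by
    rw [map_sub, map_one, mk_X_pow_eq_zero (by simp at hi; omega), sub_zero]
  rw [qPochhammer, qPochhammer, ← prod_range_mul_prod_Ico _ h, map_mul, map_prod _ _ (Ico m n),
    prod_eq_one hfactor, mul_one]

theorem mk_qBinomial_mul_qPochhammer {m j k n : ℕ} (hj : m ≤ j) (hk : m ≤ k) (hn : m ≤ n) :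
    (π m) (qBinomial (j + k) j * qPochhammer n : R⟦X⟧) = 1 := by
  have h := congrArg (π m) (qPochhammer_mul_qPochhammer_mul_qBinomial (R := R) j k)
  simp only [map_mul, mk_qPochhammer_of_le hj, mk_qPochhammer_of_le hk,
    mk_qPochhammer_of_le (hj.trans le_self_add)] at h
  rw [map_mul, mk_qPochhammer_of_le hn]
  apply ((isUnit_qPochhammer m).map (π m)).mul_left_cancel
  linear_combination h

theorem coeff_qPochhammer_pow_three_eq_zero {m N : ℕ} (hN : 2 * m ≤ N)
    (hm : ∀ k : ℤ, triangular k ≠ m) : coeff m (qPochhammer N ^ 3 : R⟦X⟧) = 0 := by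
  have hterm : ∀ t ∈ range (2 * N + 2),
      (π m) (X ^ triangular (t - N - 1) * qBinomial (2 * N + 1) t * qPochhammer N : R⟦X⟧) =
        (π m) (X ^ triangular (t - N - 1)) := by
    intro t ht
    by_cases he : triangular (t - N - 1) ≤ m
    · have h1 := le_triangular (t - N - 1)
      have h2 := le_triangular (-(t - N - 1) - 1)
      rw [triangular_neg_sub_one] at h2
      obtain ⟨s, hs⟩ : ∃ s, 2 * N + 1 = t + s := ⟨2 * N + 1 - t, by omega⟩
      rw [mul_assoc, map_mul, hs, mk_qBinomial_mul_qPochhammer (show m ≤ t by omega)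
        (show m ≤ s by omega) (show m ≤ N by omega), mul_one]
    · rw [map_mul, map_mul, mk_X_pow_eq_zero (not_le.1 he), zero_mul, zero_mul]
  have hcube : (π m) ((-1) ^ (N + 1) * qPochhammer N ^ 3 : R⟦X⟧) = (π m)
      (∑ t ∈ range (2 * N + 2), ((-1) ^ t * t : ℤ) • X ^ triangular (t - N - 1)) := by
    rw [pow_succ _ 2, ← mul_assoc, neg_one_pow_mul_qPochhammer_sq, sum_mul, map_sum, map_sum]
    refine sum_congr rfl fun t ht => ?_
    rw [smul_mul_assoc, map_zsmul, map_zsmul, hterm t ht]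
  have hcoeff := coeff_eq_of_mk_eq hcube
  simp only [map_sum, map_zsmul, coeff_X_pow, if_neg (hm _).symm, smul_zero,
    sum_const_zero] at hcoeff
  rcases neg_one_pow_eq_or R⟦X⟧ (N + 1) with h | h <;> simpa [h] using hcoeff

def supportedOnMultiples (d : ℕ) : Submonoid R⟦X⟧ where
  carrier := {f | ∀ j, ¬ d ∣ j → coeff j f = 0}
  one_mem' j hj := by rw [coeff_one, if_neg (by rintro rfl; exact hj (dvd_zero d))]
  mul_mem' {f g} hf hg j hj := by
    rw [coeff_mul]
    refine sum_eq_zero fun p hp => ?_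
    rw [HasAntidiagonal.mem_antidiagonal] at hp
    by_cases hd : d ∣ p.1
    · rw [hg p.2 fun h => hj (hp ▸ dvd_add hd h), mul_zero]
    · rw [hf p.1 hd, zero_mul]

theorem one_sub_X_pow_mul_mem_supportedOnMultiples (d k : ℕ) :
    (1 - X ^ (d * k) : R⟦X⟧) ∈ supportedOnMultiples d := fun j hj => by
  rw [map_sub, coeff_one, coeff_X_pow, if_neg (by rintro rfl; exact hj (dvd_zero d)),
    if_neg fun h => hj ⟨k, h⟩, sub_zero]

theorem coeff_prod_cube_mul_cube_seven_eq_zero {m N : ℕ} (hN : 2 * m ≤ N)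
    (hm : m % 7 = 2 ∨ m % 7 = 4 ∨ m % 7 = 5) :
    coeff m (∏ k ∈ Icc 1 N, ((1 - X ^ k) ^ 3 * (1 - X ^ (7 * k)) ^ 3) : R⟦X⟧) = 0 := by
  have hmem : (∏ k ∈ Icc 1 N, (1 - X ^ (7 * k) : R⟦X⟧)) ^ 3 ∈ supportedOnMultiples 7 :=
    Submonoid.pow_mem _ (Submonoid.prod_mem _ fun k _ =>
      one_sub_X_pow_mul_mem_supportedOnMultiples 7 k) 3
  rw [prod_mul_distrib, prod_pow, prod_pow, ← qPochhammer_eq_prod_Icc, coeff_mul]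
  refine sum_eq_zero fun p hp => ?_
  rw [HasAntidiagonal.mem_antidiagonal] at hp
  by_cases hd : 7 ∣ p.2
  · rw [coeff_qPochhammer_pow_three_eq_zero (by omega) fun k hk => ?_, zero_mul]
    have := triangular_mod_seven k
    omega
  · rw [hmem p.2 hd, mul_zero]

end PowerSeries

end

/-- The coefficients of `η(τ)³η(7τ)³ = q∏(1−q^k)³(1−q^{7k})³` vanish on the
classes `3, 5, 6 (mod 7)`. -/
theorem eta3_eta7_3_vanishing (a : ℕ → ℤ)
    (ha : ∀ n N : ℕ, n ≤ N →
      a n = (PowerSeries.coeff (R := ℤ) n)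
        (PowerSeries.X *
          ∏ k ∈ Finset.Icc 1 N,
            ((1 - PowerSeries.X ^ k) ^ 3 * (1 - PowerSeries.X ^ (7 * k)) ^ 3))) :
    ∀ n : ℕ, (n % 7 = 3 ∨ n % 7 = 5 ∨ n % 7 = 6) → a n = 0 := by
  intro n hn
  obtain ⟨m, rfl⟩ : ∃ m, n = m + 1 := ⟨n - 1, by omega⟩
  rw [ha (m + 1) (2 * (m + 1)) (by omega), coeff_succ_X_mul]
  exact coeff_prod_cube_mul_cube_seven_eq_zero (by omega) (by omega)
end

section
/- Define a(n) by ∑_{n≥1} a(n) qⁿ = q·∏_{k≥1} (1−q^k)²(1−q^{11k})² (the Fourier expansion of η(τ)²η(11τ)²). Then a(n) is even whenever n is a quadratic nonresidue modulo 11, i.e., whenever n mod 11 ∈ {2, 6, 7, 8, 10}. -/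
/-!
Modulo 2 we have `(1 - q^k)^2 = 1 - q^(2k)`, so the series is `q · E(q^2) · E(q^22)` with
`E = ∏ (1 - q^k)`. By Euler's pentagonal number theorem `E` is supported on the pentagonal numbers
`k(3k - 1)/2`, so an odd `a(n)` forces `n = 1 + k(3k - 1) + 22j`. Since
`12 (1 + k(3k - 1)) = (6k - 1)^2 + 11`, such an `n` is a square modulo 11.
-/

open Finset PowerSeries

namespace PowerSeries

variable {R : Type*} [CommRing R]

theorem coeff_prod_eq_of_subset {ι : Type*} [DecidableEq ι] {s t : Finset ι} (hst : s ⊆ t)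
    (f : ι → R⟦X⟧) {n : ℕ} (hf : ∀ i ∈ t \ s, X ^ (n + 1) ∣ f i - 1) :
    coeff n (∏ i ∈ t, f i) = coeff n (∏ i ∈ s, f i) := by
  have hdvd : X ^ (n + 1) ∣ ∏ i ∈ t \ s, f i - 1 := by
    refine prod_induction f (fun g ↦ X ^ (n + 1) ∣ g - 1) (fun g h hg hh ↦ ?_)
      (by simp) hf
    have : g * h - 1 = (g - 1) * h + (h - 1) := by ring
    rw [this]
    exact dvd_add (dvd_mul_of_dvd_left hg h) hh
  rw [← prod_sdiff hst, ← sub_eq_zero, ← map_sub, ← sub_one_mul]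
  exact X_pow_dvd_iff.mp (dvd_mul_of_dvd_left hdvd _) n (Nat.lt_succ_self n)

theorem coeff_prod_Icc_one_sub_X_pow {n N : ℕ} (hn : n ≤ N) :
    coeff n (∏ k ∈ Icc 1 N, (1 - X ^ k : R⟦X⟧)) = coeff n (pentagonalSeries R) := by
  obtain ⟨s, hs⟩ := Filter.eventually_atTop.mp (coeff_prod_one_sub_X_pow_eventually_eq R n)
  have hIcc : ∏ k ∈ Icc 1 N, (1 - X ^ k : R⟦X⟧) = ∏ k ∈ range N, (1 - X ^ (k + 1)) := by
    rw [← Ico_add_one_right_eq_Icc, prod_Ico_eq_prod_range, Nat.add_sub_cancel]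
    simp only [add_comm 1]
  rw [hIcc, ← hs (s ∪ range N) subset_union_left,
    coeff_prod_eq_of_subset subset_union_right]
  intro k hk
  have hNk : N ≤ k := by simpa using (mem_sdiff.mp hk).2
  rw [sub_sub_cancel_left, dvd_neg]
  exact pow_dvd_pow X (by omega)

theorem one_sub_X_pow_sq [CharP R 2] (m : ℕ) : (1 - X ^ m : R⟦X⟧) ^ 2 = 1 - X ^ (2 * m) := by
  have h2 : (2 : R⟦X⟧) = 0 := by
    rw [← map_ofNat (C (R := R)) 2, CharTwo.two_eq_zero, map_zero]
  rw [pow_mul']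
  linear_combination (X ^ m * (X ^ m - 1) : R⟦X⟧) * h2

theorem expand_one_sub_X_pow (p : ℕ) (hp : p ≠ 0) (k : ℕ) :
    expand p hp (1 - X ^ k : R⟦X⟧) = 1 - X ^ (p * k) := by
  rw [map_sub, map_one, map_pow, expand_X, pow_mul]

theorem prod_one_sub_X_pow_sq_mul_sq_eq_expand [CharP R 2] {d : ℕ} (hd : d ≠ 0) (s : Finset ℕ) :
    ∏ k ∈ s, ((1 - X ^ k : R⟦X⟧) ^ 2 * (1 - X ^ (d * k)) ^ 2) =
      expand 2 two_ne_zero (∏ k ∈ s, (1 - X ^ k)) *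
        expand (2 * d) (mul_ne_zero two_ne_zero hd) (∏ k ∈ s, (1 - X ^ k)) := by
  rw [map_prod, map_prod, ← prod_mul_distrib]
  refine prod_congr rfl fun k _ ↦ ?_
  rw [one_sub_X_pow_sq, one_sub_X_pow_sq, expand_one_sub_X_pow, expand_one_sub_X_pow, mul_assoc]

theorem coeff_expand_mul_expand_eq_zero {p q : ℕ} (hp : p ≠ 0) (hq : q ≠ 0) {F G : R⟦X⟧} {n : ℕ}
    (h : ∀ i j, p * i + q * j = n → coeff i F * coeff j G = 0) :
    coeff n (expand p hp F * expand q hq G) = 0 := by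
  rw [coeff_mul]
  refine sum_eq_zero fun ⟨i, j⟩ hij ↦ ?_
  rw [coeff_expand, coeff_expand]
  split_ifs with hi hj
  · obtain ⟨i, rfl⟩ := hi
    obtain ⟨j, rfl⟩ := hj
    rw [Nat.mul_div_cancel_left _ (Nat.pos_of_ne_zero hp),
      Nat.mul_div_cancel_left _ (Nat.pos_of_ne_zero hq)]
    exact h i j (mem_antidiagonal.mp hij)
  all_goals simp only [zero_mul, mul_zero]

end PowerSeries

theorem two_mul_pentagonal_add_one_eq_sq_zmod_eleven (k : ℤ) :
    ((2 * pentagonal k + 1 : ℕ) : ZMod 11) = (6 * k - 1) ^ 2 := by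
  have h := congrArg (Int.cast : ℤ → ZMod 11) (two_mul_natCast_pentagonal k)
  push_cast at h ⊢
  have h11 : (11 : ZMod 11) = 0 := by decide
  linear_combination h - (3 * k ^ 2 - k) * h11

theorem not_isSquare_natCast_zmod_eleven {n : ℕ}
    (hn : n % 11 = 2 ∨ n % 11 = 6 ∨ n % 11 = 7 ∨ n % 11 = 8 ∨ n % 11 = 10) :
    ¬ IsSquare (n : ZMod 11) := by
  rw [← ZMod.natCast_mod]
  rcases hn with h | h | h | h | h <;> rw [h] <;> decide

/-- The coefficients of `η(τ)²η(11τ)² = q∏(1−q^k)²(1−q^{11k})²` are even on the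
quadratic nonresidue classes mod 11. -/
theorem eta2_eta11_2_even (a : ℕ → ℤ)
    (ha : ∀ n N : ℕ, n ≤ N →
      a n = (PowerSeries.coeff (R := ℤ) n)
        (PowerSeries.X *
          ∏ k ∈ Finset.Icc 1 N,
            ((1 - PowerSeries.X ^ k) ^ 2 * (1 - PowerSeries.X ^ (11 * k)) ^ 2))) :
    ∀ n : ℕ, (n % 11 = 2 ∨ n % 11 = 6 ∨ n % 11 = 7 ∨ n % 11 = 8 ∨ n % 11 = 10) →
      2 ∣ a n := by
  intro n hn
  have hsq := not_isSquare_natCast_zmod_eleven hn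
  obtain ⟨m, rfl⟩ : ∃ m, n = m + 1 := ⟨n - 1, by omega⟩
  rw [← Nat.cast_ofNat, ← ZMod.intCast_zmod_eq_zero_iff_dvd, ha (m + 1) (m + 1) le_rfl,
    ← eq_intCast (Int.castRingHom (ZMod 2)), ← coeff_map]
  simp only [map_mul, map_prod, map_pow, map_sub, map_one, map_X]
  rw [prod_one_sub_X_pow_sq_mul_sq_eq_expand (by norm_num : 11 ≠ 0), coeff_succ_X_mul]
  refine coeff_expand_mul_expand_eq_zero _ _ fun i j hij ↦ ?_
  suffices coeff i (∏ k ∈ Icc 1 (m + 1), (1 - X ^ k : (ZMod 2)⟦X⟧)) = 0 by rw [this, zero_mul]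
  rw [coeff_prod_Icc_one_sub_X_pow (by omega), coeff_pentagonalSeries_eq_zero_iff]
  rintro ⟨k, rfl⟩
  refine hsq ⟨6 * k - 1, ?_⟩
  rw [← sq, ← two_mul_pentagonal_add_one_eq_sq_zmod_eleven, ← hij]
  have h22 : (22 : ZMod 11) = 0 := by decide
  push_cast
  linear_combination j * h22
end

section
/- Define a(n) by ∑_{n≥2} a(n) qⁿ = q²·∏_{k≥1} (1−q^k)⁴(1−q^{11k})⁴. Then a(n) is even whenever n is a nonzero quadratic residue modulo 11, i.e., whenever n mod 11 ∈ {1, 3, 4, 5, 9}. -/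
/-!
Modulo 2 we have `(1 - q^k)^4 ≡ 1 - q^(4k)`, so the series is congruent to `q² E(q⁴) E(q⁴⁴)`
with `E(q) = ∏ (1 - q^k)`. By Euler's pentagonal number theorem `E` is supported on the
pentagonal numbers `p = k(3k - 1)/2`, so a nonzero coefficient mod 2 sits at some `n ≡ 2 + 4p`
(mod 11). Since `6 (2 + 4p) = 11 + (6k - 1)²` and `6` is not a square mod 11, such an `n` is
never a nonzero square mod 11.
-/

open PowerSeries Filter

namespace EtaQuotient

variable {R : Type*} [CommRing R]

variable (R) in
noncomputable def eulerProd (N : ℕ) : R⟦X⟧ := ∏ k ∈ Finset.Icc 1 N, (1 - X ^ k)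

theorem eulerProd_eq_prod_range (N : ℕ) :
    eulerProd R N = ∏ n ∈ Finset.range N, (1 - X ^ (n + 1)) := by
  rw [eulerProd, Finset.range_eq_Ico, Finset.prod_Ico_add' (fun k => (1 - X ^ k : R⟦X⟧)),
    zero_add, Finset.Ico_add_one_right_eq_Icc]

theorem eventually_mem_range_pentagonal_of_coeff_eulerProd_ne_zero (m : ℕ) :
    ∀ᶠ N in atTop, (eulerProd R N).coeff m ≠ 0 → m ∈ Set.range pentagonal := by
  filter_upwards [tendsto_finset_range.eventually (coeff_prod_one_sub_X_pow_eventually_eq R m)]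
    with N hN hne
  rw [eulerProd_eq_prod_range, hN] at hne
  exact not_imp_comm.1 (coeff_pentagonalSeries_eq_zero R) hne

theorem expand_eulerProd (c : ℕ) (hc : c ≠ 0) (N : ℕ) :
    expand c hc (eulerProd R N) = ∏ k ∈ Finset.Icc 1 N, (1 - X ^ (c * k)) := by
  simp only [eulerProd, map_prod, map_sub, map_one, map_pow, expand_X, pow_mul]

theorem one_sub_pow_four_of_two_eq_zero {A : Type*} [CommRing A] (h2 : (2 : A) = 0) (x : A) :
    (1 - x) ^ 4 = 1 - x ^ 4 := by
  linear_combination (-2 * x + 3 * x ^ 2 - 2 * x ^ 3 + x ^ 4) * h2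

theorem prod_one_sub_X_pow_pow_four [CharP R 2] (N : ℕ) :
    ∏ k ∈ Finset.Icc 1 N, ((1 - X ^ k) ^ 4 * (1 - X ^ (11 * k)) ^ 4 : R⟦X⟧) =
      expand 4 four_ne_zero (eulerProd R N) * expand 44 (by norm_num) (eulerProd R N) := by
  have h2 : (2 : R⟦X⟧) = 0 := by
    rw [← map_ofNat C 2, CharTwo.two_eq_zero, map_zero]
  rw [expand_eulerProd, expand_eulerProd, ← Finset.prod_mul_distrib]
  refine Finset.prod_congr rfl fun k _ => ?_
  rw [one_sub_pow_four_of_two_eq_zero h2, one_sub_pow_four_of_two_eq_zero h2, ← pow_mul, ← pow_mul]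
  ring_nf

def IsNonzeroSquareMod11 (n : ℕ) : Prop :=
  n % 11 = 1 ∨ n % 11 = 3 ∨ n % 11 = 4 ∨ n % 11 = 5 ∨ n % 11 = 9

theorem not_isNonzeroSquareMod11_two_add_four_mul_pentagonal (k : ℤ) :
    ¬ IsNonzeroSquareMod11 (2 + 4 * pentagonal k) := by
  have hcast : ((2 + 4 * pentagonal k : ℕ) : ZMod 11) = 2 + 2 * (k * (3 * k - 1)) := by
    have := congrArg (Int.cast : ℤ → ZMod 11) (two_mul_natCast_pentagonal k)
    push_cast at this ⊢
    linear_combination 2 * this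
  have key : ∀ x : ZMod 11, 2 + 2 * (x * (3 * x - 1)) ∉ ({1, 3, 4, 5, 9} : Finset (ZMod 11)) := by
    decide
  refine fun h => key k ?_
  rw [← hcast, ← ZMod.natCast_mod]
  rcases h with h | h | h | h | h <;> simp [h]

theorem coeff_X_sq_mul_expand_mul_expand_eq_zero (f g : R⟦X⟧) {n : ℕ}
    (hn : IsNonzeroSquareMod11 n) (hf : ∀ m ≤ n, f.coeff m ≠ 0 → m ∈ Set.range pentagonal) :
    (X ^ 2 * expand 4 four_ne_zero f * expand 44 (by norm_num) g).coeff n = 0 := by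
  rw [coeff_mul]
  refine Finset.sum_eq_zero fun ⟨i, j⟩ hij => ?_
  rw [Finset.HasAntidiagonal.mem_antidiagonal] at hij
  by_cases hj : 44 ∣ j
  · suffices (X ^ 2 * expand 4 four_ne_zero f).coeff i = 0 by rw [this, zero_mul]
    rw [coeff_X_pow_mul', coeff_expand]
    split_ifs with h2 h4
    · by_contra hne
      obtain ⟨k, hk⟩ := hf _ (by omega) hne
      obtain ⟨t, rfl⟩ := hj
      have hmod : n % 11 = (2 + 4 * pentagonal k) % 11 := by omega
      exact not_isNonzeroSquareMod11_two_add_four_mul_pentagonal k (by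
        unfold IsNonzeroSquareMod11 at hn ⊢; rwa [hmod] at hn)
    all_goals rfl
  · rw [coeff_expand_of_not_dvd _ _ _ hj, mul_zero]

end EtaQuotient

/-- The coefficients of `η(τ)⁴η(11τ)⁴` are even on the nonzero quadratic residue
classes mod 11. -/
theorem eta4_eta11_4_even (a : ℕ → ℤ)
    (ha : ∀ n N : ℕ, n ≤ N →
      a n = (PowerSeries.coeff (R := ℤ) n)
        (PowerSeries.X ^ 2 *
          ∏ k ∈ Finset.Icc 1 N,
            ((1 - PowerSeries.X ^ k) ^ 4 * (1 - PowerSeries.X ^ (11 * k)) ^ 4))) :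
    ∀ n : ℕ, (n % 11 = 1 ∨ n % 11 = 3 ∨ n % 11 = 4 ∨ n % 11 = 5 ∨ n % 11 = 9) →
      2 ∣ a n := by
  intro n hn
  obtain ⟨N, hnN, hpent⟩ : ∃ N ≥ n, ∀ m ∈ Finset.Iic n,
      (EtaQuotient.eulerProd (ZMod 2) N).coeff m ≠ 0 → m ∈ Set.range pentagonal :=
    ((eventually_ge_atTop n).and ((eventually_all_finset _).2 fun m _ =>
      EtaQuotient.eventually_mem_range_pentagonal_of_coeff_eulerProd_ne_zero m)).exists
  have hcoeff : ((a n : ℤ) : ZMod 2) = 0 := by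
    rw [ha n N hnN, ← eq_intCast (Int.castRingHom (ZMod 2)), ← coeff_map]
    simp only [map_mul, map_pow, map_X, map_prod, map_sub, map_one]
    rw [EtaQuotient.prod_one_sub_X_pow_pow_four, ← mul_assoc]
    exact EtaQuotient.coeff_X_sq_mul_expand_mul_expand_eq_zero _ _ hn fun m hm =>
      hpent m (Finset.mem_Iic.2 hm)
  exact_mod_cast (ZMod.intCast_zmod_eq_zero_iff_dvd _ 2).1 hcoeff
end
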